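/- arXiv:1908.01669 — 11 statements merged into one kernel-verified Lean document; each statement's English description precedes it below -/
import Mathlib

section
/- An allocation z is fractionally Pareto-optimal if and only if there exists a vector of strictly positive weights (λ_i)_{i∈[n]} such that for all agents i and objects o, z_{i,o} > 0 implies λ_i v_{i,o} ≥ λ_j v_{j,o} for every agent j. -/
/-!
Weights `λ > 0` certify `z` exactly when they satisfy the linear inequalities
`λ_j v_{j,o} ≤ λ_i v_{i,o}`, one for each object `o`, holder `i` of part of `o`, and agent `j`.
If there are none, Stiemke's form of Farkas' lemma yields nonnegative multipliers `β_{o,i,j}` of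
these inequalities whose combination is a nonnegative, nonzero vector indexed by the agents. Read
`β_{o,i,j}` as an amount of object `o` handed from `i` to `j`: that vector is precisely the change
of utilities caused by the trade, so a small multiple of the trade Pareto-improves `z`.
Conversely, under certifying weights every object is held only by agents of maximal weighted
value, so `z` maximises weighted welfare and cannot be Pareto-dominated.

Farkas' lemma follows by separating a point from a closed cone; a finitely generated cone is
closed because, by Carathéodory's argument, it is a finite union of images of orthants under
injective linear maps.
-/

open Finset

/-- An allocation: nonnegative matrix with column sums 1. -/
def IsAllocation {n m : ℕ} (z : Fin n → Fin m → ℝ) : Prop :=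
  (∀ i o, 0 ≤ z i o) ∧ ∀ o, ∑ i, z i o = 1

/-- Additive utility of agent `i` at allocation `z`. -/
def utility {n m : ℕ} (v z : Fin n → Fin m → ℝ) (i : Fin n) : ℝ :=
  ∑ o, v i o * z i o

/-- Fractional Pareto optimality: no feasible allocation weakly improves everyone
and strictly improves someone. -/
def IsFPO {n m : ℕ} (v z : Fin n → Fin m → ℝ) : Prop :=
  ¬ ∃ y, IsAllocation y ∧ (∀ i, utility v z i ≤ utility v y i) ∧
    ∃ i, utility v z i < utility v y i

/-- Number of sharings of allocation `z`. -/
noncomputable def sharings {n m : ℕ} (z : Fin n → Fin m → ℝ) : ℕ :=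
  ∑ o : Fin m, ((Finset.univ.filter (fun i : Fin n => 0 < z i o)).card - 1)

open Matrix Filter Topology

section ClosedCone

variable {ι E : Type*}

lemma exists_nonneg_sub_smul_eq_zero [Fintype ι] {c d : ι → ℝ} (hc : 0 ≤ c) (hd : ∃ i, 0 < d i) :
    ∃ r : ℝ, 0 ≤ c - r • d ∧ ∃ j, 0 < d j ∧ (c - r • d) j = 0 := by
  classical
  obtain ⟨j, hjP, hj⟩ := (univ.filter (0 < d ·)).exists_min_image (fun i => c i / d i)
    (let ⟨i, hi⟩ := hd; ⟨i, by simp [hi]⟩)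
  have hdj : 0 < d j := (mem_filter.1 hjP).2
  refine ⟨c j / d j, fun i => ?_, j, hdj, by simp [div_mul_cancel₀ _ hdj.ne']⟩
  have hr : 0 ≤ c j / d j := div_nonneg (hc j) hdj.le
  simp only [Pi.zero_apply, Pi.sub_apply, Pi.smul_apply, smul_eq_mul]
  rcases lt_or_ge 0 (d i) with hdi | hdi
  · linarith [(le_div_iff₀ hdi).1 (hj i (by simp [hdi]))]
  · have hci : 0 ≤ c i := hc i
    linarith [mul_nonpos_of_nonneg_of_nonpos hr hdi]

def nonnegSupportedOn (s : Finset ι) : Set (ι → ℝ) := {c | 0 ≤ c ∧ ∀ i ∉ s, c i = 0}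

lemma isClosed_nonnegSupportedOn (s : Finset ι) : IsClosed (nonnegSupportedOn s) := by
  simp only [nonnegSupportedOn, Set.ofPred_and, Set.ofPred_forall]
  exact (isClosed_le continuous_const continuous_id).inter <|
    isClosed_iInter fun i => isClosed_iInter fun _ =>
      isClosed_eq (continuous_apply i) continuous_const

variable [AddCommGroup E] [Module ℝ E]

lemma LinearMap.image_nonnegSupportedOn_eq_biUnion_erase [Fintype ι] [DecidableEq ι]
    (L : (ι → ℝ) →ₗ[ℝ] E) {s : Finset ι} {d : ι → ℝ} (hd : L d = 0) (hds : ∀ i ∉ s, d i = 0)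
    (hd0 : d ≠ 0) :
    L '' nonnegSupportedOn s = ⋃ j ∈ s, L '' nonnegSupportedOn (s.erase j) := by
  obtain ⟨d, hd, hds, hpos⟩ : ∃ d : ι → ℝ, L d = 0 ∧ (∀ i ∉ s, d i = 0) ∧ ∃ i, 0 < d i := by
    obtain ⟨i, hi⟩ := Function.ne_iff.1 hd0
    rcases hi.lt_or_gt with h | h
    · exact ⟨-d, by simp [hd], by simpa using hds, i, by simpa using h⟩
    · exact ⟨d, hd, hds, i, h⟩
  refine subset_antisymm ?_ (Set.iUnion₂_subset fun j _ => Set.image_mono fun c hc =>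
    ⟨hc.1, fun i hi => hc.2 i fun h => hi (mem_of_mem_erase h)⟩)
  rintro _ ⟨c, ⟨hc0, hcs⟩, rfl⟩
  -- Carathéodory: slide `c` along the relation `d` until one of its coefficients vanishes.
  obtain ⟨r, hr0, j, hdj, hrj⟩ := exists_nonneg_sub_smul_eq_zero hc0 hpos
  have hj : j ∈ s := by_contra fun h => hdj.ne' (hds j h)
  refine Set.mem_biUnion hj ⟨c - r • d, ⟨hr0, fun i hi => ?_⟩, by simp [hd]⟩
  by_cases hij : i = j
  · exact hij ▸ hrj
  · have his : i ∉ s := fun h => hi (mem_erase.2 ⟨hij, h⟩)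
    simp [hcs i his, hds i his]

variable [TopologicalSpace E] [IsTopologicalAddGroup E] [ContinuousSMul ℝ E] [T2Space E]

lemma LinearMap.isClosed_image_of_disjoint_ker {F : Type*} [AddCommGroup F] [Module ℝ F]
    [TopologicalSpace F] [IsTopologicalAddGroup F] [ContinuousSMul ℝ F] [T2Space F]
    [FiniteDimensional ℝ F] (L : F →ₗ[ℝ] E) {W : Submodule ℝ F} (hW : Disjoint W (ker L))
    {C : Set F} (hC : IsClosed C) (hCW : C ⊆ W) : IsClosed (L '' C) := by
  have hL : L '' C = L.domRestrict W '' (W.subtype ⁻¹' C) := by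
    ext x
    constructor
    · rintro ⟨c, hc, rfl⟩
      exact ⟨⟨c, hCW hc⟩, hc, rfl⟩
    · rintro ⟨c, hc, rfl⟩
      exact ⟨c, hc, rfl⟩
  rw [hL]
  have hinj : ker (L.domRestrict W) = ⊥ := ker_eq_bot.2 (injective_domRestrict_iff.2 hW)
  exact (isClosedEmbedding_of_injective hinj).isClosedMap _ (hC.preimage continuous_subtype_val)

theorem LinearMap.isClosed_image_nonnegSupportedOn [Fintype ι] (L : (ι → ℝ) →ₗ[ℝ] E)
    (s : Finset ι) :
    IsClosed (L '' nonnegSupportedOn s) := by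
  induction s using Finset.strongInduction with
  | H s ih =>
    let W : Submodule ℝ (ι → ℝ) := Submodule.pi (↑s)ᶜ fun _ => ⊥
    by_cases hW : Disjoint W (ker L)
    · exact L.isClosed_image_of_disjoint_ker hW (isClosed_nonnegSupportedOn s)
        fun c hc => by simpa [W] using hc.2
    · classical
      simp only [Submodule.disjoint_def, not_forall] at hW
      obtain ⟨d, hdW, hdL, hd0⟩ := hW
      rw [L.image_nonnegSupportedOn_eq_biUnion_erase hdL (by simpa [W] using hdW) hd0]
      exact isClosed_biUnion_finset fun j hj => ih _ (erase_ssubset hj)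

theorem LinearMap.isClosed_image_Ici_zero [Fintype ι] (L : (ι → ℝ) →ₗ[ℝ] E) :
    IsClosed (L '' Set.Ici 0) := by
  convert L.isClosed_image_nonnegSupportedOn univ using 2
  ext c
  simp [nonnegSupportedOn]

end ClosedCone

section Farkas

variable {ρ ι : Type*} [Fintype ρ] [Fintype ι]

theorem Matrix.exists_vecMul_nonneg_dotProduct_neg (A : Matrix ρ ι ℝ) (b : ρ → ℝ)
    (h : ¬ ∃ x, 0 ≤ x ∧ A *ᵥ x = b) : ∃ y, 0 ≤ y ᵥ* A ∧ y ⬝ᵥ b < 0 := by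
  classical
  let C : ProperCone ℝ (ρ → ℝ) :=
    ⟨(PointedCone.positive ℝ (ι → ℝ)).map A.mulVecLin, A.mulVecLin.isClosed_image_Ici_zero⟩
  obtain ⟨f, hfC, hfb⟩ :=
    C.hyperplane_separation_point (x₀ := b) fun ⟨x, hx, hxb⟩ => h ⟨x, hx, hxb⟩
  set y : ρ → ℝ := fun r => f (Pi.single r 1)
  have hf : ∀ x, f x = y ⬝ᵥ x := fun x => by
    conv_lhs => rw [← univ_sum_single x]
    rw [map_sum, dotProduct]
    refine sum_congr rfl fun r _ => ?_
    have : Pi.single r (x r) = x r • Pi.single r (1 : ℝ) := by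
      rw [← Pi.single_smul, smul_eq_mul, mul_one]
    rw [this, map_smul, smul_eq_mul, mul_comm]
  refine ⟨y, fun k => ?_, hf b ▸ hfb⟩
  have := hfC (A *ᵥ Pi.single k 1) ⟨Pi.single k 1, by simp [Pi.single_nonneg], rfl⟩
  rwa [hf, dotProduct_mulVec, dotProduct_single, mul_one] at this

theorem Matrix.exists_nonneg_vecMul_nonneg_ne_zero (B : Matrix ρ ι ℝ)
    (h : ¬ ∃ x, (∀ i, 0 < x i) ∧ B *ᵥ x ≤ 0) : ∃ y, 0 ≤ y ∧ 0 ≤ y ᵥ* B ∧ y ᵥ* B ≠ 0 := by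
  classical
  have hinfeas : ¬ ∃ x, 0 ≤ x ∧ fromCols B (1 : Matrix ρ ρ ℝ) *ᵥ x = -(B *ᵥ 1) := by
    rintro ⟨x, hx, hxb⟩
    refine h ⟨1 + x ∘ Sum.inl, fun i => add_pos_of_pos_of_nonneg one_pos (hx _), fun r => ?_⟩
    have hr := congrFun hxb r
    have hs : 0 ≤ x (Sum.inr r) := hx _
    simp only [fromCols_mulVec, one_mulVec, Pi.add_apply, Pi.neg_apply, Function.comp_apply] at hr
    simp only [mulVec_add, Pi.add_apply, Pi.zero_apply]
    linarith
  obtain ⟨y, hy, hyb⟩ := (fromCols B 1).exists_vecMul_nonneg_dotProduct_neg _ hinfeas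
  rw [vecMul_fromCols] at hy
  refine ⟨y, fun r => by simpa using hy (Sum.inr r), fun i => by simpa using hy (Sum.inl i),
    fun h0 => ?_⟩
  simp [dotProduct_mulVec, h0] at hyb

end Farkas

lemma sum_mul_le_sum_mul_of_pos_imp_max {ι : Type*} [Fintype ι] {a y z : ι → ℝ} (hy : 0 ≤ y)
    (hy1 : ∑ i, y i = 1) (hz : 0 ≤ z) (hz1 : ∑ i, z i = 1) (hmax : ∀ i, 0 < z i → ∀ j, a j ≤ a i) :
    ∑ i, a i * y i ≤ ∑ i, a i * z i := by
  obtain ⟨w, hw⟩ : ∃ w, 0 < z w := by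
    by_contra! h
    linarith [sum_nonpos fun i (_ : i ∈ univ) => h i]
  have hmass : ∀ i, a i * z i = a w * z i := fun i => by
    rcases (hz i).eq_or_lt with h | h
    · simp [← h]
    · rw [le_antisymm (hmax w hw i) (hmax i h w)]
  calc ∑ i, a i * y i ≤ ∑ i, a w * y i :=
        sum_le_sum fun i _ => mul_le_mul_of_nonneg_right (hmax w hw i) (hy i)
    _ = ∑ i, a i * z i := by simp_rw [hmass, ← mul_sum, hy1, hz1]

lemma eventually_nonneg_add_mul {a b : ℝ} (ha : 0 ≤ a) (hb : a = 0 → 0 ≤ b) :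
    ∀ᶠ t in 𝓝[>] 0, 0 ≤ a + t * b := by
  rcases ha.eq_or_lt with h | h
  · filter_upwards [self_mem_nhdsWithin] with t ht
    simpa [← h] using mul_nonneg (le_of_lt ht) (hb h.symm)
  · have : Tendsto (fun t => a + t * b) (𝓝 0) (𝓝 a) :=
      (continuous_const.add (continuous_id.mul continuous_const)).tendsto' 0 a (by simp)
    exact nhdsWithin_le_nhds ((this.eventually (lt_mem_nhds h)).mono fun _ => le_of_lt)

section FairDivision

variable {n m : ℕ} {v z d : Fin n → Fin m → ℝ}

lemma utility_add_smul (v z d : Fin n → Fin m → ℝ) (t : ℝ) (i : Fin n) :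
    utility v (z + t • d) i = utility v z i + t * utility v d i := by
  simp only [utility, Pi.add_apply, Pi.smul_apply, smul_eq_mul, mul_sum, ← sum_add_distrib]
  exact sum_congr rfl fun o _ => by ring

lemma IsAllocation.eventually_add_smul (hz : IsAllocation z) (hcol : ∀ o, ∑ i, d i o = 0)
    (hd : ∀ i o, z i o = 0 → 0 ≤ d i o) : ∀ᶠ t in 𝓝[>] (0 : ℝ), IsAllocation (z + t • d) := by
  filter_upwards [eventually_all.2 fun i => eventually_all.2 fun o =>
    eventually_nonneg_add_mul (hz.1 i o) (hd i o)] with t ht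
  refine ⟨ht, fun o => ?_⟩
  simp [sum_add_distrib, ← mul_sum, hz.2 o, hcol o]

lemma IsFPO.utility_eq_zero_of_nonneg (hfpo : IsFPO v z) (hz : IsAllocation z)
    (hcol : ∀ o, ∑ i, d i o = 0) (hd : ∀ i o, z i o = 0 → 0 ≤ d i o)
    (hu : ∀ i, 0 ≤ utility v d i) (i : Fin n) : utility v d i = 0 := by
  by_contra hi
  obtain ⟨t, ht, htpos : 0 < t⟩ :=
    ((hz.eventually_add_smul hcol hd).and self_mem_nhdsWithin).exists
  refine hfpo ⟨z + t • d, ht, fun j => ?_, i, ?_⟩ <;> rw [utility_add_smul]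
  · nlinarith [hu j]
  · nlinarith [(hu i).lt_of_ne' hi]

lemma IsAllocation.weighted_utility_le {y : Fin n → Fin m → ℝ} {lam : Fin n → ℝ}
    (hz : IsAllocation z) (hy : IsAllocation y)
    (hcert : ∀ i o, 0 < z i o → ∀ j, lam j * v j o ≤ lam i * v i o) :
    ∑ i, lam i * utility v y i ≤ ∑ i, lam i * utility v z i := by
  have hswap : ∀ x : Fin n → Fin m → ℝ,
      ∑ i, lam i * utility v x i = ∑ o, ∑ i, lam i * v i o * x i o := fun x => by
    simp only [utility, mul_sum, mul_assoc]
    exact sum_comm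
  rw [hswap, hswap]
  exact sum_le_sum fun o _ => sum_mul_le_sum_mul_of_pos_imp_max (fun i => hy.1 i o) (hy.2 o)
    (fun i => hz.1 i o) (hz.2 o) fun i hi => hcert i o hi

lemma IsAllocation.isFPO_of_weights {lam : Fin n → ℝ} (hz : IsAllocation z)
    (hlam : ∀ i, 0 < lam i) (hcert : ∀ i o, 0 < z i o → ∀ j, lam j * v j o ≤ lam i * v i o) :
    IsFPO v z := by
  rintro ⟨y, hy, hle, i, hlt⟩
  refine (hz.weighted_utility_le hy hcert).not_gt
    (sum_lt_sum (fun j _ => ?_) ⟨i, mem_univ i, ?_⟩)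
  · exact mul_le_mul_of_nonneg_left (hle j) (hlam j).le
  · exact mul_lt_mul_of_pos_left hlt (hlam i)

-- `φ o i j` is the amount of object `o` handed from agent `i` to agent `j`.
def transfer (φ : Fin m → Fin n → Fin n → ℝ) : Fin n → Fin m → ℝ :=
  fun k o => ∑ i, φ o i k - ∑ j, φ o k j

lemma sum_transfer (φ : Fin m → Fin n → Fin n → ℝ) (o : Fin m) : ∑ k, transfer φ k o = 0 := by
  simp only [transfer, sum_sub_distrib]
  rw [sum_comm, sub_self]

lemma transfer_nonneg {φ : Fin m → Fin n → Fin n → ℝ} (hφ : 0 ≤ φ) {k : Fin n} {o : Fin m}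
    (hk : ∀ j, φ o k j = 0) : 0 ≤ transfer φ k o := by
  simpa [transfer, hk] using sum_nonneg fun i (_ : i ∈ univ) => hφ o i k

-- Row `(o, i, j)` is the change of utilities when `i` hands a unit of `o` to `j`; it is kept only
-- if `i` holds part of `o`, since only such trades are feasible at `z`.
noncomputable def exchangeMatrix (v z : Fin n → Fin m → ℝ) :
    Matrix (Fin m × Fin n × Fin n) (Fin n) ℝ :=
  fun ⟨o, i, j⟩ => if 0 < z i o then Pi.single j (v j o) - Pi.single i (v i o) else 0

lemma exchangeMatrix_mulVec (lam : Fin n → ℝ) (o : Fin m) (i j : Fin n) :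
    (exchangeMatrix v z *ᵥ lam) (o, i, j) =
      if 0 < z i o then lam j * v j o - lam i * v i o else 0 := by
  split_ifs with h
  · simp only [exchangeMatrix, mulVec, if_pos h]
    rw [sub_dotProduct, single_dotProduct, single_dotProduct, mul_comm, mul_comm (v i o)]
  · simp [exchangeMatrix, mulVec, h]

lemma vecMul_exchangeMatrix (β : Fin m × Fin n × Fin n → ℝ) :
    β ᵥ* exchangeMatrix v z =
      utility v (transfer fun o i j => if 0 < z i o then β (o, i, j) else 0) := by
  ext k
  simp only [vecMul, dotProduct, Fintype.sum_prod_type, utility, transfer, exchangeMatrix]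
  refine sum_congr rfl fun o _ => ?_
  have hterm : ∀ i j, β (o, i, j) *
      (if 0 < z i o then Pi.single j (v j o) - Pi.single i (v i o) else 0 : Fin n → ℝ) k =
      (if 0 < z i o then β (o, i, j) else 0) *
        (Pi.single j (v j o) - Pi.single i (v i o) : Fin n → ℝ) k :=
    fun i j => by split_ifs <;> simp
  simp only [hterm, Pi.sub_apply, mul_sub, sum_sub_distrib, Pi.single_apply, mul_ite, mul_zero]
  simp [sum_ite_irrel, mul_sum, mul_comm]

end FairDivision

/-- fPO is equivalent to the existence of a positive welfare-weight certificate. -/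
theorem stmt1 {n m : ℕ} (v z : Fin n → Fin m → ℝ) (hz : IsAllocation z) :
    IsFPO v z ↔
      ∃ lam : Fin n → ℝ, (∀ i, 0 < lam i) ∧
        ∀ i o, 0 < z i o → ∀ j, lam j * v j o ≤ lam i * v i o := by
  refine ⟨fun hfpo => ?_, fun ⟨lam, hlam, hcert⟩ => hz.isFPO_of_weights hlam hcert⟩
  by_contra hcert
  obtain ⟨β, hβ, hu, hne⟩ := (exchangeMatrix v z).exists_nonneg_vecMul_nonneg_ne_zero
    fun ⟨lam, hlam, hB⟩ => hcert ⟨lam, hlam, fun i o hio j => by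
      simpa [exchangeMatrix_mulVec, hio] using hB (o, i, j)⟩
  rw [vecMul_exchangeMatrix] at hu hne
  refine hne (funext (hfpo.utility_eq_zero_of_nonneg hz (sum_transfer _) (fun k o hko => ?_) hu))
  refine transfer_nonneg (fun o i j => ?_) fun j => by simp [hko]
  split_ifs
  exacts [hβ _, le_rfl]
end

section
/- Let z be a fractionally Pareto-optimal allocation and i ≠ j two agents. Then there exists a threshold t_{i,j} > 0 such that for any object o with v_{i,o}·v_{j,o} > 0: if |v_{i,o}|/|v_{j,o}| > t_{i,j}, then z_{j,o} = 0 in case o is a good (v_{i,o},v_{j,o} > 0) and z_{i,o} = 0 in case o is a bad (v_{i,o},v_{j,o} < 0); if |v_{i,o}|/|v_{j,o}| < t_{i,j}, the symmetric conclusions hold with i and j swapped. In particular, i and j can both consume positive amounts of an object o only if v_{i,o} = t_{i,j}·v_{j,o} with both values of the same sign, or v_{i,o} = v_{j,o} = 0. -/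
open Finset

lemma no_trade {n m : ℕ} (v z : Fin n → Fin m → ℝ) (hz : IsAllocation z)
    (hfpo : IsFPO v z) (i j : Fin n) (hij : i ≠ j) (w : Fin m → ℝ)
    (hwl : ∀ o, -(z i o) ≤ w o) (hwu : ∀ o, w o ≤ z j o)
    (hi : 0 ≤ ∑ o, v i o * w o) (hj : 0 ≤ ∑ o, -(v j o * w o))
    (hs : 0 < ∑ o, v i o * w o ∨ 0 < ∑ o, -(v j o * w o)) : False := by
  have hj' : 0 ≤ -∑ o, v j o * w o := by rw [← Finset.sum_neg_distrib]; exact hj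
  have hs' : 0 < ∑ o, v i o * w o ∨ 0 < -∑ o, v j o * w o := by
    rcases hs with h | h
    · exact Or.inl h
    · exact Or.inr (by rw [← Finset.sum_neg_distrib]; exact h)
  apply hfpo
  set y : Fin n → Fin m → ℝ :=
    fun a b => z a b + (if a = i then w b else if a = j then -w b else 0) with hy
  have hsplit : ∀ (a : Fin n) (b : Fin m),
      (if a = i then w b else if a = j then -w b else 0) =
      (if a = i then w b else 0) + (if a = j then -w b else 0) := by
    intro a b
    by_cases h1 : a = i
    · subst h1; simp [hij]
    · simp [h1]
  have hutil : ∀ a : Fin n, utility v y a = utility v z a +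
      (if a = i then ∑ b, v i b * w b else if a = j then ∑ b, -(v j b * w b) else 0) := by
    intro a
    by_cases h1 : a = i
    · subst h1
      simp [utility, hy, hij, mul_add, Finset.sum_add_distrib]
    · by_cases h2 : a = j
      · subst h2
        simp [utility, hy, h1, mul_add, Finset.sum_add_distrib, mul_neg,
          Finset.sum_neg_distrib]
      · simp [utility, hy, h1, h2]
  refine ⟨y, ⟨?_, ?_⟩, ?_, ?_⟩
  · intro a b
    by_cases h1 : a = i
    · subst h1; have := hwl b; simp [hy, hij]; linarith
    · by_cases h2 : a = j
      · subst h2; have := hwu b; have := hz.1 a b; simp [hy, h1]; linarith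
      · simp [hy, h1, h2]; exact hz.1 a b
  · intro b
    have : ∑ a, y a b = (∑ a, z a b) +
        ∑ a, (if a = i then w b else if a = j then -w b else 0) := by
      simp [hy, Finset.sum_add_distrib]
    rw [this, hz.2 b]
    have : ∑ a : Fin n, (if a = i then w b else if a = j then -w b else 0)
        = ∑ a : Fin n, ((if a = i then w b else 0) + (if a = j then -w b else 0)) := by
      exact Finset.sum_congr rfl (fun a _ => hsplit a b)
    rw [this, Finset.sum_add_distrib, Finset.sum_ite_eq' univ i (fun _ => w b),
      Finset.sum_ite_eq' univ j (fun _ => -w b)]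
    simp
  · intro a
    rw [hutil a]
    by_cases h1 : a = i
    · subst h1; simp [hij]; linarith
    · by_cases h2 : a = j
      · subst h2; simp [h1]; linarith [hj']
      · simp [h1, h2]
  · rcases hs' with h | h
    · exact ⟨i, by rw [hutil i]; simp [hij]; linarith⟩
    · exact ⟨j, by rw [hutil j]; simp [hij.symm]; linarith [h]⟩

lemma no_single {n m : ℕ} (v z : Fin n → Fin m → ℝ) (hz : IsAllocation z)
    (hfpo : IsFPO v z) (i j : Fin n) (hij : i ≠ j) (o : Fin m) (ε : ℝ)
    (h1 : -(z i o) ≤ ε) (h2 : ε ≤ z j o)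
    (hi : 0 ≤ v i o * ε) (hj : 0 ≤ -(v j o * ε))
    (hs : 0 < v i o * ε ∨ 0 < -(v j o * ε)) : False := by
  classical
  have e1 : (∑ b, v i b * (if b = o then ε else 0)) = v i o * ε := by
    have h : ∀ b, v i b * (if b = o then ε else 0) = (if b = o then v i o * ε else 0) := by
      intro b; by_cases hb : b = o <;> simp [hb]
    rw [Finset.sum_congr rfl fun b _ => h b, Finset.sum_ite_eq' univ o fun _ => v i o * ε]
    simp
  have e2 : (∑ b, -(v j b * (if b = o then ε else 0))) = -(v j o * ε) := by
    have h : ∀ b, -(v j b * (if b = o then ε else 0)) = (if b = o then -(v j o * ε) else 0) := by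
      intro b; by_cases hb : b = o <;> simp [hb]
    rw [Finset.sum_congr rfl fun b _ => h b, Finset.sum_ite_eq' univ o fun _ => -(v j o * ε)]
    simp
  apply no_trade v z hz hfpo i j hij (fun b => if b = o then ε else 0)
  · intro b
    by_cases hb : b = o
    · subst hb; simpa using h1
    · simp [hb]; linarith [hz.1 i b]
  · intro b
    by_cases hb : b = o
    · subst hb; simpa using h2
    · simp [hb]; exact hz.1 j b
  · rw [e1]; exact hi
  · rw [e2]; exact hj
  · rcases hs with h | h
    · exact Or.inl (by rw [e1]; exact h)
    · exact Or.inr (by rw [e2]; exact h)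

lemma shared_nonpos {n m : ℕ} (v z : Fin n → Fin m → ℝ) (hz : IsAllocation z)
    (hfpo : IsFPO v z) (i j : Fin n) (hij : i ≠ j) (o : Fin m)
    (hzi : 0 < z i o) (hzj : 0 < z j o) (hP : ¬ 0 < v i o * v j o) :
    v i o = 0 ∧ v j o = 0 := by
  rcases lt_trichotomy (v i o) 0 with hvi | hvi | hvi
  · rcases lt_trichotomy (v j o) 0 with hvj | hvj | hvj
    · exact absurd (mul_pos_of_neg_of_neg hvi hvj) hP
    · exact (no_single v z hz hfpo i j hij o (-(z i o)) le_rfl (by linarith)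
        (by nlinarith) (by rw [hvj]; simp) (Or.inl (by nlinarith))).elim
    · exact (no_single v z hz hfpo i j hij o (-(z i o)) le_rfl (by linarith)
        (by nlinarith) (by nlinarith) (Or.inl (by nlinarith))).elim
  · rcases lt_trichotomy (v j o) 0 with hvj | hvj | hvj
    · exact (no_single v z hz hfpo i j hij o (z j o) (by linarith) le_rfl
        (by rw [hvi]; simp) (by nlinarith) (Or.inr (by nlinarith))).elim
    · exact ⟨hvi, hvj⟩
    · exact (no_single v z hz hfpo i j hij o (-(z i o)) le_rfl (by linarith)
        (by rw [hvi]; simp) (by nlinarith) (Or.inr (by nlinarith))).elim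
  · rcases lt_trichotomy (v j o) 0 with hvj | hvj | hvj
    · exact (no_single v z hz hfpo i j hij o (z j o) (by linarith) le_rfl
        (by nlinarith) (by nlinarith) (Or.inl (by nlinarith))).elim
    · exact (no_single v z hz hfpo i j hij o (z j o) (by linarith) le_rfl
        (by nlinarith) (by rw [hvj]; simp) (Or.inl (by nlinarith))).elim
    · exact absurd (mul_pos hvi hvj) hP

lemma ratio_abs {a b : ℝ} (h : 0 < a * b) : a / b = |a| / |b| := by
  rcases mul_pos_iff.mp h with ⟨h1, h2⟩ | ⟨h1, h2⟩
  · rw [abs_of_pos h1, abs_of_pos h2]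
  · rw [abs_of_neg h1, abs_of_neg h2, neg_div_neg_eq]

lemma key_ineq {n m : ℕ} (v z : Fin n → Fin m → ℝ) (hz : IsAllocation z)
    (hfpo : IsFPO v z) (i j : Fin n) (hij : i ≠ j) (o o' : Fin m)
    (hP : 0 < v i o * v j o) (hP' : 0 < v i o' * v j o')
    (hL : (0 < v i o ∧ 0 < z j o) ∨ (v i o < 0 ∧ 0 < z i o))
    (hR : (0 < v i o' ∧ 0 < z i o') ∨ (v i o' < 0 ∧ 0 < z j o')) :
    |v i o| / |v j o| ≤ |v i o'| / |v j o'| := by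
  classical
  by_contra hlt
  push_neg at hlt
  have hsame : (0 < v i o ∧ 0 < v j o) ∨ (v i o < 0 ∧ v j o < 0) := mul_pos_iff.mp hP
  have hsame' : (0 < v i o' ∧ 0 < v j o') ∨ (v i o' < 0 ∧ v j o' < 0) := mul_pos_iff.mp hP'
  have hjo : v j o ≠ 0 := by rcases hsame with ⟨_, h⟩ | ⟨_, h⟩ <;> [exact ne_of_gt h; exact ne_of_lt h]
  have hjo' : v j o' ≠ 0 := by rcases hsame' with ⟨_, h⟩ | ⟨_, h⟩ <;> [exact ne_of_gt h; exact ne_of_lt h]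
  have hoo' : o ≠ o' := by
    intro h; rw [h] at hlt; exact absurd hlt (lt_irrefl _)
  set c1 : ℝ := (if 0 < v j o then z j o else z i o) * |v j o| with hc1
  set c2 : ℝ := (if 0 < v j o' then z i o' else z j o') * |v j o'| with hc2
  have hc1pos : 0 < c1 := by
    rcases hsame with ⟨h1, h2⟩ | ⟨h1, h2⟩
    · rcases hL with ⟨_, h3⟩ | ⟨h3, _⟩
      · rw [hc1, if_pos h2]; exact mul_pos h3 (abs_pos.mpr hjo)
      · linarith
    · rcases hL with ⟨h3, _⟩ | ⟨_, h3⟩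
      · linarith
      · rw [hc1, if_neg (by linarith)]; exact mul_pos h3 (abs_pos.mpr hjo)
  have hc2pos : 0 < c2 := by
    rcases hsame' with ⟨h1, h2⟩ | ⟨h1, h2⟩
    · rcases hR with ⟨_, h3⟩ | ⟨h3, _⟩
      · rw [hc2, if_pos h2]; exact mul_pos h3 (abs_pos.mpr hjo')
      · linarith
    · rcases hR with ⟨h3, _⟩ | ⟨_, h3⟩
      · linarith
      · rw [hc2, if_neg (by linarith)]; exact mul_pos h3 (abs_pos.mpr hjo')
  set c : ℝ := min c1 c2 with hc
  have hcpos : 0 < c := lt_min hc1pos hc2pos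
  set w : Fin m → ℝ := fun b => if b = o then c / v j o else if b = o' then -(c / v j o') else 0 with hw
  have hwo : w o = c / v j o := by rw [hw]; simp
  have hwo' : w o' = -(c / v j o') := by rw [hw]; simp [Ne.symm hoo']
  have hsum : ∀ f : Fin m → ℝ, (∑ b, f b * w b) = f o * (c / v j o) + f o' * (-(c / v j o')) := by
    intro f
    have h : ∀ b, f b * w b =
        (if b = o then f o * (c / v j o) else 0) + (if b = o' then f o' * (-(c / v j o')) else 0) := by
      intro b
      by_cases hb : b = o
      · rw [hw]; simp [hb, hoo']
      · by_cases hb' : b = o'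
        · rw [hw]; simp [hb, hb', Ne.symm hoo']
        · rw [hw]; simp [hb, hb']
    rw [Finset.sum_congr rfl fun b _ => h b, Finset.sum_add_distrib,
      Finset.sum_ite_eq' univ o fun _ => f o * (c / v j o),
      Finset.sum_ite_eq' univ o' fun _ => f o' * (-(c / v j o'))]
    simp
  have hSj : (∑ b, -(v j b * w b)) = 0 := by
    have h : (∑ b, -(v j b * w b)) = -∑ b, v j b * w b := by rw [← Finset.sum_neg_distrib]
    rw [h, hsum (v j)]
    field_simp
    ring
  have hSi : (∑ b, v i b * w b) = c * (|v i o| / |v j o| - |v i o'| / |v j o'|) := by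
    rw [hsum (v i), ← ratio_abs hP, ← ratio_abs hP']
    field_simp
    ring
  have hSipos : 0 < ∑ b, v i b * w b := by
    rw [hSi]
    exact mul_pos hcpos (by linarith)
  apply no_trade v z hz hfpo i j hij w ?_ ?_ (le_of_lt hSipos) (le_of_eq hSj.symm) (Or.inl hSipos)
  · intro b
    by_cases hb : b = o
    · rw [hb, hwo]
      rcases lt_or_gt_of_ne hjo with hneg | hpos
      · have hb1 : c ≤ z i o * |v j o| := by
          have h : c1 = z i o * |v j o| := by rw [hc1, if_neg (by linarith)]
          rw [← h]; exact min_le_left c1 c2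
        rw [abs_of_neg hneg] at hb1
        rw [le_div_iff_of_neg hneg]
        nlinarith
      · have h0 : (0:ℝ) < c / v j o := div_pos hcpos hpos
        linarith [hz.1 i o]
    · by_cases hb' : b = o'
      · rw [hb', hwo']
        rcases lt_or_gt_of_ne hjo' with hneg | hpos
        · have h0 : (0:ℝ) < -(c / v j o') := by
            have : c / v j o' < 0 := div_neg_of_pos_of_neg hcpos hneg
            linarith
          linarith [hz.1 i o']
        · have hb2 : c ≤ z i o' * |v j o'| := by
            have h : c2 = z i o' * |v j o'| := by rw [hc2, if_pos hpos]
            rw [← h]; exact min_le_right c1 c2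
          rw [abs_of_pos hpos] at hb2
          rw [neg_le_neg_iff, div_le_iff₀ hpos]
          linarith
      · have : w b = 0 := by rw [hw]; simp [hb, hb']
        rw [this]
        linarith [hz.1 i b]
  · intro b
    by_cases hb : b = o
    · rw [hb, hwo]
      rcases lt_or_gt_of_ne hjo with hneg | hpos
      · have h0 : c / v j o < 0 := div_neg_of_pos_of_neg hcpos hneg
        linarith [hz.1 j o]
      · have hb1 : c ≤ z j o * |v j o| := by
          have h : c1 = z j o * |v j o| := by rw [hc1, if_pos hpos]
          rw [← h]; exact min_le_left c1 c2
        rw [abs_of_pos hpos] at hb1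
        rw [div_le_iff₀ hpos]
        linarith
    · by_cases hb' : b = o'
      · rw [hb', hwo']
        rcases lt_or_gt_of_ne hjo' with hneg | hpos
        · have hb2 : c ≤ z j o' * |v j o'| := by
            have h : c2 = z j o' * |v j o'| := by rw [hc2, if_neg (by linarith)]
            rw [← h]; exact min_le_right c1 c2
          rw [abs_of_neg hneg] at hb2
          rw [← div_neg, div_le_iff₀ (by linarith : (0:ℝ) < -(v j o'))]
          linarith
        · have h0 : (0:ℝ) < c / v j o' := div_pos hcpos hpos
          linarith [hz.1 j o']
      · have : w b = 0 := by rw [hw]; simp [hb, hb']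
        rw [this]
        linarith [hz.1 j b]

/-- Threshold structure of fPO allocations for a pair of agents. -/
theorem stmt3 {n m : ℕ} (v z : Fin n → Fin m → ℝ) (hz : IsAllocation z)
    (hfpo : IsFPO v z) (i j : Fin n) (hij : i ≠ j) :
    ∃ t : ℝ, 0 < t ∧
      (∀ o : Fin m, 0 < v i o * v j o →
        (t < |v i o| / |v j o| →
          (0 < v i o → z j o = 0) ∧ (v i o < 0 → z i o = 0)) ∧
        (|v i o| / |v j o| < t →
          (0 < v i o → z i o = 0) ∧ (v i o < 0 → z j o = 0))) ∧
      (∀ o : Fin m, 0 < z i o → 0 < z j o →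
        (v i o = t * v j o ∧ 0 < v i o * v j o) ∨ (v i o = 0 ∧ v j o = 0)) := by
  classical
  set ρ : Fin m → ℝ := fun o => |v i o| / |v j o| with hρ
  set Lf : Finset (Fin m) := univ.filter
    (fun o => (0 < v i o ∧ 0 < z j o ∨ v i o < 0 ∧ 0 < z i o) ∧ 0 < v i o * v j o) with hLf
  set Rf : Finset (Fin m) := univ.filter
    (fun o => (0 < v i o ∧ 0 < z i o ∨ v i o < 0 ∧ 0 < z j o) ∧ 0 < v i o * v j o) with hRf
  have hρpos : ∀ o : Fin m, 0 < v i o * v j o → 0 < ρ o := by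
    intro o h
    have h1 : v i o ≠ 0 := by intro h0; rw [h0, zero_mul] at h; exact lt_irrefl _ h
    have h2 : v j o ≠ 0 := by intro h0; rw [h0, mul_zero] at h; exact lt_irrefl _ h
    exact div_pos (abs_pos.mpr h1) (abs_pos.mpr h2)
  have hK : ∀ o ∈ Lf, ∀ o' ∈ Rf, ρ o ≤ ρ o' := by
    intro o ho o' ho'
    rw [hLf, mem_filter] at ho
    rw [hRf, mem_filter] at ho'
    exact key_ineq v z hz hfpo i j hij o o' ho.2.2 ho'.2.2 ho.2.1 ho'.2.1
  have hT : ∃ t : ℝ, 0 < t ∧ (∀ o ∈ Lf, ρ o ≤ t) ∧ ∀ o ∈ Rf, t ≤ ρ o := by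
    by_cases hRne : Rf.Nonempty
    · refine ⟨Rf.inf' hRne ρ, ?_, fun o ho => Finset.le_inf' hRne ρ (hK o ho),
        fun o ho => Finset.inf'_le ρ ho⟩
      obtain ⟨o', ho', he⟩ := Finset.exists_mem_eq_inf' hRne ρ
      rw [he]
      have := (mem_filter.mp (hRf ▸ ho')).2.2
      exact hρpos _ this
    · by_cases hLne : Lf.Nonempty
      · refine ⟨Lf.sup' hLne ρ, ?_, fun o ho => Finset.le_sup' ρ ho,
          fun o ho => absurd ⟨o, ho⟩ hRne⟩
        obtain ⟨o, ho, he⟩ := Finset.exists_mem_eq_sup' hLne ρ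
        rw [he]
        have := (mem_filter.mp (hLf ▸ ho)).2.2
        exact hρpos _ this
      · exact ⟨1, one_pos, fun o ho => absurd ⟨o, ho⟩ hLne, fun o ho => absurd ⟨o, ho⟩ hRne⟩
  obtain ⟨t, ht0, htL, htR⟩ := hT
  have memL : ∀ o : Fin m, 0 < v i o * v j o →
      (0 < v i o ∧ 0 < z j o ∨ v i o < 0 ∧ 0 < z i o) → o ∈ Lf := by
    intro o h1 h2; rw [hLf, mem_filter]; exact ⟨mem_univ _, h2, h1⟩
  have memR : ∀ o : Fin m, 0 < v i o * v j o →
      (0 < v i o ∧ 0 < z i o ∨ v i o < 0 ∧ 0 < z j o) → o ∈ Rf := by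
    intro o h1 h2; rw [hRf, mem_filter]; exact ⟨mem_univ _, h2, h1⟩
  have pos_of_ne : ∀ (a : Fin n) (o : Fin m), z a o ≠ 0 → 0 < z a o := by
    intro a o h; exact lt_of_le_of_ne (hz.1 a o) (Ne.symm h)
  refine ⟨t, ht0, ?_, ?_⟩
  · intro o hP
    constructor
    · intro hgt
      constructor
      · intro hvi
        by_contra h0
        exact absurd (htL o (memL o hP (Or.inl ⟨hvi, pos_of_ne j o h0⟩))) (not_le.mpr hgt)
      · intro hvi
        by_contra h0
        exact absurd (htL o (memL o hP (Or.inr ⟨hvi, pos_of_ne i o h0⟩))) (not_le.mpr hgt)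
    · intro hlt
      constructor
      · intro hvi
        by_contra h0
        exact absurd (htR o (memR o hP (Or.inl ⟨hvi, pos_of_ne i o h0⟩))) (not_le.mpr hlt)
      · intro hvi
        by_contra h0
        exact absurd (htR o (memR o hP (Or.inr ⟨hvi, pos_of_ne j o h0⟩))) (not_le.mpr hlt)
  · intro o hzi hzj
    by_cases hP : 0 < v i o * v j o
    · left
      refine ⟨?_, hP⟩
      have hsame : (0 < v i o ∧ 0 < v j o) ∨ (v i o < 0 ∧ v j o < 0) := mul_pos_iff.mp hP
      have hoL : o ∈ Lf := by
        rcases hsame with ⟨h1, _⟩ | ⟨h1, _⟩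
        · exact memL o hP (Or.inl ⟨h1, hzj⟩)
        · exact memL o hP (Or.inr ⟨h1, hzi⟩)
      have hoR : o ∈ Rf := by
        rcases hsame with ⟨h1, _⟩ | ⟨h1, _⟩
        · exact memR o hP (Or.inl ⟨h1, hzi⟩)
        · exact memR o hP (Or.inr ⟨h1, hzj⟩)
      have heq : ρ o = t := le_antisymm (htL o hoL) (htR o hoR)
      have hjne : v j o ≠ 0 := by
        rcases hsame with ⟨_, h⟩ | ⟨_, h⟩ <;> [exact ne_of_gt h; exact ne_of_lt h]
      have habs : |v i o| = t * |v j o| := by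
        have := heq
        rw [hρ] at this
        field_simp at this
        linarith [this]
      rcases hsame with ⟨h1, h2⟩ | ⟨h1, h2⟩
      · rw [abs_of_pos h1, abs_of_pos h2] at habs
        exact habs
      · rw [abs_of_neg h1, abs_of_neg h2] at habs
        linarith [habs]
    · exact Or.inr (shared_nonpos v z hz hfpo i j hij o hzi hzj hP)
end

section
/- In a fractionally Pareto-optimal allocation, if an object o satisfies v_{i,o} > 0 for some agent i (o is a good), then every agent j consuming a positive amount of o has v_{j,o} > 0; if max_i v_{i,o} = 0 (o is neutral or zero), then every agent consuming a positive amount of o has v_{j,o} = 0. -/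
open Finset

lemma key {n m : ℕ} (v z : Fin n → Fin m → ℝ) (hz : IsAllocation z)
    (hfpo : IsFPO v z) (o : Fin m) (i j : Fin n) (hzj : 0 < z j o)
    (hj : v j o ≤ 0) (hi : 0 ≤ v i o) (hlt : v j o < v i o) : False := by
  have hij : i ≠ j := fun h => by simp [h] at hlt
  set y : Fin n → Fin m → ℝ := fun k o' =>
    z k o' + (if o' = o then (if k = i then z j o else 0)
      - (if k = j then z j o else 0) else 0) with hy
  have hsum : ∀ k : Fin n, utility v y k = utility v z k +
      v k o * ((if k = i then z j o else 0) - (if k = j then z j o else 0)) := by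
    intro k
    unfold utility
    have : ∀ o' : Fin m, v k o' * y k o' = v k o' * z k o' +
        (if o' = o then v k o * ((if k = i then z j o else 0)
          - (if k = j then z j o else 0)) else 0) := by
      intro o'
      by_cases h : o' = o <;> simp [hy, h, mul_add]
    simp_rw [this]
    rw [Finset.sum_add_distrib, Finset.sum_ite_eq' Finset.univ o]
    simp
  apply hfpo
  refine ⟨y, ⟨?_, ?_⟩, ?_, ?_⟩
  · intro k o'
    by_cases h : o' = o
    · by_cases hk : k = j
      · simp [hy, h, hk, if_neg (Ne.symm hij)]
      · by_cases hk' : k = i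
        · have h1 := hz.1 i o
          simp [hy, h, hk', hk, if_neg hij]
          linarith
        · simp only [hy, h, if_pos rfl, if_neg hk, if_neg hk']
          simpa using hz.1 k o
    · simpa [hy, h] using hz.1 k o'
  · intro o'
    by_cases h : o' = o
    · simp only [hy, h, if_pos rfl, ite_true]
      rw [Finset.sum_add_distrib, hz.2 o, Finset.sum_sub_distrib,
        Finset.sum_ite_eq' Finset.univ i, Finset.sum_ite_eq' Finset.univ j]
      simp
    · simp only [hy, if_neg h]
      simpa using hz.2 o'
  · intro k
    rw [hsum k]
    by_cases hk : k = i
    · rw [hk, if_pos rfl, if_neg hij]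
      have := mul_nonneg hi hzj.le
      simp only [sub_zero]
      linarith
    · by_cases hk' : k = j
      · rw [if_neg hk, hk', if_pos rfl]
        have : 0 ≤ v j o * (0 - z j o) := by nlinarith
        linarith
      · simp [hk, hk']
  · rcases lt_or_eq_of_le hi with hpos | hzero
    · refine ⟨i, ?_⟩
      rw [hsum i, if_pos rfl, if_neg hij]
      nlinarith
    · refine ⟨j, ?_⟩
      rw [hsum j, if_neg (Ne.symm hij), if_pos rfl]
      have hneg : v j o < 0 := by rw [← hzero] at hlt; exact hlt
      nlinarith

/-- Every fPO allocation is non-malicious. -/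
theorem stmt4 {n m : ℕ} (v z : Fin n → Fin m → ℝ) (hz : IsAllocation z)
    (hfpo : IsFPO v z) :
    ∀ o : Fin m,
      ((∃ i, 0 < v i o) → ∀ j, 0 < z j o → 0 < v j o) ∧
      (((∀ i, v i o ≤ 0) ∧ ∃ i, v i o = 0) → ∀ j, 0 < z j o → v j o = 0) := by
  intro o
  constructor
  · rintro ⟨i, hi⟩ j hzj
    by_contra h
    push_neg at h
    exact key v z hz hfpo o i j hzj h hi.le (lt_of_le_of_lt h hi)
  · rintro ⟨hle, i, hi⟩ j hzj
    by_contra h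
    have hjlt : v j o < 0 := lt_of_le_of_ne (hle j) h
    exact key v z hz hfpo o i j hzj hjlt.le hi.ge (by rw [hi]; exact hjlt)
end

section
/- For any n agents with additive valuations, there exists a fractionally Pareto-optimal and proportional allocation with at most n−1 sharings. -/
open Finset

/-! ### Auxiliary material -/

namespace Stmt7Aux

variable {n m : ℕ}

lemma utility_perturb (v y w : Fin n → Fin m → ℝ) (t : ℝ) (i : Fin n) :
    utility v (fun i o => y i o + t * w i o) i
      = utility v y i + t * ∑ o, v i o * w i o := by
  simp only [utility, Finset.mul_sum, mul_add, Finset.sum_add_distrib]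
  congr 1
  exact Finset.sum_congr rfl fun o _ => by ring

/-- Move along a column-sum-preserving direction supported on the support of `y`
until some positive entry is killed. -/
lemma perturb (y w : Fin n → Fin m → ℝ) (hy : IsAllocation y)
    (hs : ∀ i o, y i o = 0 → w i o = 0)
    (hc : ∀ o, ∑ i, w i o = 0) (hw : w ≠ 0) :
    ∃ t : ℝ, 0 < t ∧ IsAllocation (fun i o => y i o + t * w i o) ∧
      ∃ i o, 0 < y i o ∧ y i o + t * w i o = 0 := by
  classical
  -- the set of negative entries of w is nonempty
  have hNne : ∃ p : Fin n × Fin m, w p.1 p.2 < 0 := by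
    by_contra h
    push_neg at h
    apply hw
    funext i o
    have hz : ∀ i' ∈ Finset.univ, (0:ℝ) ≤ w i' o := fun i' _ => h (i', o)
    have := (Finset.sum_eq_zero_iff_of_nonneg hz).mp (hc o) i (Finset.mem_univ i)
    exact this
  set N : Finset (Fin n × Fin m) := Finset.univ.filter (fun p => w p.1 p.2 < 0) with hN
  have hNne' : N.Nonempty := by
    obtain ⟨p, hp⟩ := hNne
    exact ⟨p, by simp [hN, hp]⟩
  obtain ⟨p₀, hp₀N, hp₀min⟩ :=
    Finset.exists_min_image N (fun p => y p.1 p.2 / (-(w p.1 p.2))) hNne'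
  have hwp₀ : w p₀.1 p₀.2 < 0 := by simpa [hN] using hp₀N
  have hyp₀ : 0 < y p₀.1 p₀.2 := by
    rcases lt_or_eq_of_le (hy.1 p₀.1 p₀.2) with h | h
    · exact h
    · exact absurd (hs _ _ h.symm) (ne_of_lt hwp₀)
  set t : ℝ := y p₀.1 p₀.2 / (-(w p₀.1 p₀.2)) with ht
  have htpos : 0 < t := div_pos hyp₀ (by linarith)
  refine ⟨t, htpos, ⟨?_, ?_⟩, p₀.1, p₀.2, hyp₀, ?_⟩
  · -- nonnegativity
    intro i o
    show (0:ℝ) ≤ y i o + t * w i o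
    rcases le_or_gt 0 (w i o) with h | h
    · have : 0 ≤ t * w i o := mul_nonneg htpos.le h
      have := hy.1 i o
      linarith
    · have hmem : (i, o) ∈ N := by simp [hN, h]
      have hle : t ≤ y i o / (-(w i o)) := hp₀min (i, o) hmem
      have hpos : (0:ℝ) < -(w i o) := by linarith
      have : t * (-(w i o)) ≤ y i o := by
        rw [← le_div_iff₀ hpos] at *
        exact hle
      nlinarith
  · -- column sums
    intro o
    rw [Finset.sum_add_distrib, hy.2 o, ← Finset.mul_sum, hc o]
    ring
  · -- killed entry
    have hne : w p₀.1 p₀.2 ≠ 0 := ne_of_lt hwp₀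
    show y p₀.1 p₀.2 + t * w p₀.1 p₀.2 = 0
    rw [ht, div_mul_eq_mul_div, mul_div_assoc, div_neg, div_self hne]
    ring

/-- The linear embedding of functions on the support into matrices. -/
noncomputable def Emap (S : Finset (Fin n × Fin m)) :
    ({p : Fin n × Fin m // p ∈ S} → ℝ) →ₗ[ℝ] (Fin n → Fin m → ℝ) where
  toFun d := fun i o => if h : (i, o) ∈ S then d ⟨(i, o), h⟩ else 0
  map_add' a b := by
    funext i o
    by_cases h : (i, o) ∈ S <;> simp [h]
  map_smul' t a := by
    funext i o
    by_cases h : (i, o) ∈ S <;> simp [h]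

/-- The constraint map: column sums and utility changes. -/
noncomputable def Fmap (v : Fin n → Fin m → ℝ) :
    (Fin n → Fin m → ℝ) →ₗ[ℝ] (Fin m → ℝ) × (Fin n → ℝ) where
  toFun z := (fun o => ∑ i, z i o, fun i => ∑ o, v i o * z i o)
  map_add' a b := by
    refine Prod.ext ?_ ?_ <;> funext x <;>
      simp [Finset.sum_add_distrib, mul_add]
  map_smul' t a := by
    refine Prod.ext ?_ ?_ <;> funext x <;>
      simp [Finset.mul_sum, mul_left_comm]

/-- Compactness of the set of allocations with utility lower bounds. -/
lemma compactW (v : Fin n → Fin m → ℝ) (c : Fin n → ℝ) :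
    IsCompact {y : Fin n → Fin m → ℝ | IsAllocation y ∧ ∀ i, c i ≤ utility v y i} := by
  have hcont : ∀ (i : Fin n) (o : Fin m),
      Continuous fun y : Fin n → Fin m → ℝ => y i o :=
    fun i o => (continuous_apply o).comp (continuous_apply i)
  have hpi : IsCompact (Set.univ.pi fun _ : Fin n => Set.univ.pi fun _ : Fin m =>
      Set.Icc (0:ℝ) 1) :=
    isCompact_univ_pi fun _ => isCompact_univ_pi fun _ => isCompact_Icc
  apply IsCompact.of_isClosed_subset hpi
  · have heq : {y : Fin n → Fin m → ℝ | IsAllocation y ∧ ∀ i, c i ≤ utility v y i}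
        = (⋂ i, ⋂ o, {y : Fin n → Fin m → ℝ | 0 ≤ y i o}) ∩
          ((⋂ o, {y : Fin n → Fin m → ℝ | ∑ i, y i o = 1}) ∩
           (⋂ i, {y : Fin n → Fin m → ℝ | c i ≤ utility v y i})) := by
      ext y
      simp only [Set.mem_setOf_eq, Set.mem_inter_iff, Set.mem_iInter, IsAllocation]
      tauto
    rw [heq]
    refine IsClosed.inter ?_ (IsClosed.inter ?_ ?_)
    · exact isClosed_iInter fun i => isClosed_iInter fun o =>
        isClosed_le continuous_const (hcont i o)
    · exact isClosed_iInter fun o => isClosed_eq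
        (continuous_finset_sum _ fun i _ => hcont i o) continuous_const
    · refine isClosed_iInter fun i => isClosed_le continuous_const ?_
      show Continuous fun y : Fin n → Fin m → ℝ => ∑ o, v i o * y i o
      exact continuous_finset_sum _ fun o _ => continuous_const.mul (hcont i o)
  · intro y hy
    rw [Set.mem_pi]
    intro i _
    rw [Set.mem_pi]
    intro o _
    refine ⟨hy.1.1 i o, ?_⟩
    calc y i o ≤ ∑ i', y i' o :=
          Finset.single_le_sum (fun i' _ => hy.1.1 i' o) (Finset.mem_univ i)
      _ = 1 := hy.1.2 o

end Stmt7Aux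

/-- There always exists an fPO and proportional allocation with at most n-1 sharings. -/
theorem stmt7 {n m : ℕ} (hn : 0 < n) (v : Fin n → Fin m → ℝ) :
    ∃ z : Fin n → Fin m → ℝ, IsAllocation z ∧ IsFPO v z ∧
      (∀ i, (∑ o, v i o) / n ≤ utility v z i) ∧
      sharings z ≤ n - 1 := by
  classical
  open Stmt7Aux in
  have hnR : (0:ℝ) < n := by exact_mod_cast hn
  set c : Fin n → ℝ := fun i => (∑ o, v i o) / n with hc
  set W : Set (Fin n → Fin m → ℝ) :=
    {y | IsAllocation y ∧ ∀ i, c i ≤ utility v y i} with hWdef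
  -- the equal split belongs to W
  have hz0 : (fun (_ : Fin n) (_ : Fin m) => (1:ℝ)/n) ∈ W := by
    refine ⟨⟨fun i o => by positivity, fun o => ?_⟩, fun i => ?_⟩
    · rw [Finset.sum_const, Finset.card_univ, Fintype.card_fin, nsmul_eq_mul]
      field_simp
    · simp only [hc, utility]
      rw [Finset.sum_div]
      exact le_of_eq (Finset.sum_congr rfl fun o _ => by ring)
  -- maximize total utility over W
  have hWc : IsCompact W := Stmt7Aux.compactW v c
  have hcontf : Continuous fun y : Fin n → Fin m → ℝ => ∑ i, utility v y i := by
    refine continuous_finset_sum _ fun i _ => ?_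
    show Continuous fun y : Fin n → Fin m → ℝ => ∑ o, v i o * y i o
    exact continuous_finset_sum _ fun o _ =>
      continuous_const.mul ((continuous_apply o).comp (continuous_apply i))
  obtain ⟨zs, hzsW, hzsmax⟩ := hWc.exists_isMaxOn ⟨_, hz0⟩ hcontf.continuousOn
  -- zs is fPO
  have hfpo : IsFPO v zs := by
    rintro ⟨y, hy, hle, i0, hlt⟩
    have hyW : y ∈ W := ⟨hy, fun i => le_trans (hzsW.2 i) (hle i)⟩
    have h1 : ∑ i, utility v y i ≤ ∑ i, utility v zs i := hzsmax hyW
    have h2 : ∑ i, utility v zs i < ∑ i, utility v y i :=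
      Finset.sum_lt_sum (fun i _ => hle i) ⟨i0, Finset.mem_univ _, hlt⟩
    linarith
  -- the set of allocations with the same utility profile as zs
  set P : Set (Fin n → Fin m → ℝ) :=
    {y | IsAllocation y ∧ ∀ i, utility v y i = utility v zs i} with hPdef
  have hPfpo : ∀ y ∈ P, IsFPO v y := by
    rintro y hy ⟨y', hy', hle, i0, hlt⟩
    exact hfpo ⟨y', hy', fun i => (hy.2 i) ▸ hle i, i0, (hy.2 i0) ▸ hlt⟩
  have hPW : ∀ y ∈ P, ∀ i, c i ≤ utility v y i :=
    fun y hy i => (hy.2 i).symm ▸ hzsW.2 i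
  -- pick an element of P with minimal support
  set suppF : (Fin n → Fin m → ℝ) → Finset (Fin n × Fin m) :=
    fun y => Finset.univ.filter (fun p => 0 < y p.1 p.2) with hsuppF
  set Cards : Set ℕ := {k | ∃ y ∈ P, (suppF y).card = k} with hCards
  have hCne : Cards.Nonempty := ⟨(suppF zs).card, zs, ⟨hzsW.1, fun _ => rfl⟩, rfl⟩
  obtain ⟨y, hyP, hycard⟩ := Nat.sInf_mem hCne
  have hymin : ∀ y' ∈ P, (suppF y).card ≤ (suppF y').card := by
    intro y' hy'
    rw [hycard]
    exact Nat.sInf_le ⟨y', hy', rfl⟩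
  have hyA : IsAllocation y := hyP.1
  refine ⟨y, hyA, hPfpo y hyP, hPW y hyP, ?_⟩
  -- now bound sharings
  set S : Finset (Fin n × Fin m) := suppF y with hS
  set C : Fin m → Finset (Fin n) :=
    fun o => Finset.univ.filter (fun i => 0 < y i o) with hCdef
  -- card of S is the sum of column support cardinalities
  have hcards : S.card = ∑ o, (C o).card := by
    rw [Finset.card_eq_sum_card_fiberwise
      (f := fun p : Fin n × Fin m => p.2) (t := Finset.univ) (fun x _ => Finset.mem_univ _)]
    refine Finset.sum_congr rfl fun o _ => ?_
    refine Finset.card_bij (fun p _ => p.1) ?_ ?_ ?_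
    · intro p hp
      simp only [hS, hsuppF, hCdef, Finset.mem_filter, Finset.mem_univ, true_and] at hp ⊢
      rw [← hp.2]
      exact hp.1
    · intro p hp q hq hpq
      simp only [Finset.mem_filter] at hp hq
      exact Prod.ext hpq (hp.2.trans hq.2.symm)
    · intro i hi
      simp only [hCdef, Finset.mem_filter, Finset.mem_univ, true_and] at hi
      exact ⟨(i, o), by simp [hS, hsuppF, hi], rfl⟩
  -- each column has at least one consumer
  have hcol1 : ∀ o, 1 ≤ (C o).card := by
    intro o
    rw [Nat.one_le_iff_ne_zero, Ne, Finset.card_eq_zero, ← Finset.not_nonempty_iff_eq_empty,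
      not_not]
    by_contra h
    rw [Finset.not_nonempty_iff_eq_empty, Finset.filter_eq_empty_iff] at h
    have hle : ∀ i ∈ (Finset.univ : Finset (Fin n)), y i o ≤ 0 := by
      intro i _
      have := h (Finset.mem_univ i)
      push_neg at this
      exact this
    have := Finset.sum_nonpos hle
    rw [hyA.2 o] at this
    linarith
  have hsumS : sharings y + m = S.card := by
    have : sharings y + m = ∑ o : Fin m, (((C o).card - 1) + 1) := by
      rw [Finset.sum_add_distrib, Finset.sum_const, Finset.card_univ, Fintype.card_fin,
        smul_eq_mul, mul_one]
      rfl
    rw [this, hcards]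
    exact Finset.sum_congr rfl fun o _ => Nat.sub_add_cancel (hcol1 o)
  -- the key cardinality bound
  have hkey : S.card + 1 ≤ n + m := by
    by_contra hbig
    push_neg at hbig
    have hbig' : n + m ≤ S.card := by omega
    -- set up the linear maps
    set Ψ : ({p : Fin n × Fin m // p ∈ S} → ℝ) →ₗ[ℝ] (Fin m → ℝ) × (Fin n → ℝ) :=
      (Stmt7Aux.Fmap v).comp (Stmt7Aux.Emap S) with hΨ
    have hEsupp : ∀ (d : {p : Fin n × Fin m // p ∈ S} → ℝ) (i : Fin n) (o : Fin m),
        y i o = 0 → Stmt7Aux.Emap S d i o = 0 := by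
      intro d i o h
      have hnotS : (i, o) ∉ S := by
        simp only [hS, hsuppF, Finset.mem_filter, Finset.mem_univ, true_and, h]
        exact lt_irrefl 0
      simp [Stmt7Aux.Emap, hnotS]
    have hΨ1 : ∀ (d : {p : Fin n × Fin m // p ∈ S} → ℝ) (o : Fin m),
        ∑ i, Stmt7Aux.Emap S d i o = (Ψ d).1 o := fun d o => rfl
    have hΨ2 : ∀ (d : {p : Fin n × Fin m // p ∈ S} → ℝ) (i : Fin n),
        ∑ o, v i o * Stmt7Aux.Emap S d i o = (Ψ d).2 i := fun d i => rfl
    have hdim1 : Module.finrank ℝ ({p : Fin n × Fin m // p ∈ S} → ℝ) = S.card := by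
      rw [Module.finrank_pi, Fintype.card_coe]
    have hdim2 : Module.finrank ℝ ((Fin m → ℝ) × (Fin n → ℝ)) = m + n := by
      rw [Module.finrank_prod, Module.finrank_pi, Module.finrank_pi, Fintype.card_fin,
        Fintype.card_fin]
    by_cases hinj : Function.Injective Ψ
    · -- injective case: Ψ is bijective, get a strict Pareto improving direction
      have hle : S.card ≤ m + n := by
        rw [← hdim1, ← hdim2]
        exact LinearMap.finrank_le_finrank_of_injective hinj
      have hScard : S.card = m + n := by omega
      have hrange : LinearMap.range Ψ = ⊤ := by
        apply Submodule.eq_top_of_finrank_eq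
        have h3 := LinearMap.finrank_range_add_finrank_ker Ψ
        rw [LinearMap.ker_eq_bot.mpr hinj, finrank_bot, add_zero, hdim1, hScard] at h3
        rw [h3, hdim2]
      obtain ⟨d, hd⟩ : ∃ d, Ψ d = ((fun _ => 0), (fun _ => 1)) := by
        have := LinearMap.range_eq_top.mp hrange
        exact this _
      set w := Stmt7Aux.Emap S d with hw
      have hwc : ∀ o, ∑ i, w i o = 0 := by
        intro o
        rw [hΨ1 d o, hd]
      have hwu : ∀ i, ∑ o, v i o * w i o = 1 := by
        intro i
        rw [hΨ2 d i, hd]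
      have hwne : w ≠ 0 := by
        intro h0
        have := hwu ⟨0, hn⟩
        rw [h0] at this
        simp at this
      obtain ⟨t, htpos, htalloc, -⟩ :=
        Stmt7Aux.perturb y w hyA (fun i o h => hEsupp d i o h) hwc hwne
      refine hPfpo y hyP ⟨(fun i o => y i o + t * w i o), htalloc, fun i => ?_, ⟨0, hn⟩, ?_⟩
      · rw [Stmt7Aux.utility_perturb, hwu]
        linarith
      · rw [Stmt7Aux.utility_perturb, hwu]
        linarith
    · -- non-injective case: get a support-reducing direction, contradicting minimality
      rw [← LinearMap.ker_eq_bot] at hinj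
      obtain ⟨d, hdker, hdne⟩ := Submodule.exists_mem_ne_zero_of_ne_bot hinj
      set w := Stmt7Aux.Emap S d with hw
      have hwne : w ≠ 0 := by
        intro h0
        apply hdne
        funext p
        have : w p.1.1 p.1.2 = 0 := by rw [h0]; rfl
        rw [hw] at this
        simpa [Stmt7Aux.Emap, p.2] using this
      rw [LinearMap.mem_ker] at hdker
      have hwc : ∀ o, ∑ i, w i o = 0 := by
        intro o
        rw [hΨ1 d o, hdker]
        rfl
      have hwu : ∀ i, ∑ o, v i o * w i o = 0 := by
        intro i
        rw [hΨ2 d i, hdker]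
        rfl
      obtain ⟨t, htpos, htalloc, i₀, o₀, hyi₀, hkill⟩ :=
        Stmt7Aux.perturb y w hyA (fun i o h => hEsupp d i o h) hwc hwne
      set y' : Fin n → Fin m → ℝ := fun i o => y i o + t * w i o with hy'
      have hy'P : y' ∈ P := by
        refine ⟨htalloc, fun i => ?_⟩
        rw [hy', Stmt7Aux.utility_perturb, hwu, mul_zero, add_zero]
        exact hyP.2 i
      have hsub : suppF y' ⊆ suppF y := by
        intro p hp
        simp only [hsuppF, Finset.mem_filter, Finset.mem_univ, true_and] at hp ⊢
        by_contra hcon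
        have h0 : y p.1 p.2 = 0 := le_antisymm (not_lt.mp hcon) (hyA.1 p.1 p.2)
        have hw0 : w p.1 p.2 = 0 := hEsupp d p.1 p.2 h0
        rw [hy'] at hp
        simp only [h0, hw0, mul_zero, add_zero] at hp
        exact lt_irrefl 0 hp
      have hssub : suppF y' ⊂ suppF y := by
        refine ⟨hsub, fun hsup => ?_⟩
        have hmem : (i₀, o₀) ∈ suppF y := by
          simp [hsuppF, hyi₀]
        have := hsup hmem
        simp only [hsuppF, Finset.mem_filter, Finset.mem_univ, true_and] at this
        rw [hy'] at this
        simp only [hkill] at this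
        exact lt_irrefl 0 this
      have hge := hymin y' hy'P
      have hlt := Finset.card_lt_card hssub
      exact absurd hlt (not_lt.mpr hge)
  omega
end

section
/- Let a_1,...,a_p be positive integers, and let Alice value good o at a_o and Bob value good o at a_o + b_o, where all b_o > 0 and Σ_o b_o < 1/2. Then there exists an envy-free partition of the goods into (X_A, X_B) (no sharing) if and only if the integers a_1,...,a_p can be partitioned into two subsets of equal sum. -/
open Finset

/-- With Alice's integer values and Bob's slightly perturbed values, an envy-free
partition exists iff the integers can be partitioned into two sets of equal sum. -/
theorem stmt10 {p : ℕ} (a : Fin p → ℤ) (b : Fin p → ℝ)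
    (ha : ∀ o, 0 < a o) (hb : ∀ o, 0 < b o) (hbsum : (∑ o, b o) < 1 / 2) :
    (∃ X : Finset (Fin p),
        (∑ o ∈ Xᶜ, (a o : ℝ)) ≤ ∑ o ∈ X, (a o : ℝ) ∧
        (∑ o ∈ X, ((a o : ℝ) + b o)) ≤ ∑ o ∈ Xᶜ, ((a o : ℝ) + b o)) ↔
    ∃ S : Finset (Fin p), ∑ o ∈ S, a o = ∑ o ∈ Sᶜ, a o := by
  constructor
  · rintro ⟨X, hA, hB⟩
    refine ⟨X, ?_⟩
    have key : ((∑ o ∈ X, a o : ℤ) : ℝ) - ((∑ o ∈ Xᶜ, a o : ℤ) : ℝ)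
        ≤ (∑ o ∈ Xᶜ, b o) - (∑ o ∈ X, b o) := by
      push_cast
      simp only [Finset.sum_add_distrib] at hB
      linarith
    have hbX : 0 ≤ ∑ o ∈ X, b o :=
      Finset.sum_nonneg fun o _ => (hb o).le
    have hbXc : ∑ o ∈ Xᶜ, b o ≤ ∑ o, b o :=
      Finset.sum_le_sum_of_subset_of_nonneg (Finset.subset_univ _)
        (fun o _ _ => (hb o).le)
    have hlt : ((∑ o ∈ X, a o : ℤ) : ℝ) - ((∑ o ∈ Xᶜ, a o : ℤ) : ℝ) < 1 := by
      calc _ ≤ (∑ o ∈ Xᶜ, b o) - (∑ o ∈ X, b o) := key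
        _ ≤ ∑ o, b o := by linarith
        _ < 1 := by linarith
    have hge : ((∑ o ∈ Xᶜ, a o : ℤ) : ℝ) ≤ ((∑ o ∈ X, a o : ℤ) : ℝ) := by
      push_cast; linarith
    have h1 : (∑ o ∈ X, a o) - (∑ o ∈ Xᶜ, a o) < 1 := by
      have := hlt
      rw [← Int.cast_sub] at this
      exact_mod_cast this
    have h2 : (∑ o ∈ Xᶜ, a o) ≤ (∑ o ∈ X, a o) := by exact_mod_cast hge
    omega
  · rintro ⟨S, hS⟩
    rcases le_total (∑ o ∈ S, b o) (∑ o ∈ Sᶜ, b o) with h | h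
    · refine ⟨S, ?_, ?_⟩
      · have : ((∑ o ∈ Sᶜ, a o : ℤ) : ℝ) = ((∑ o ∈ S, a o : ℤ) : ℝ) := by
          exact_mod_cast hS.symm
        push_cast at this
        linarith
      · have : ((∑ o ∈ S, a o : ℤ) : ℝ) = ((∑ o ∈ Sᶜ, a o : ℤ) : ℝ) := by
          exact_mod_cast hS
        push_cast at this
        simp only [Finset.sum_add_distrib]
        linarith
    · refine ⟨Sᶜ, ?_, ?_⟩ <;> rw [compl_compl]
      · have : ((∑ o ∈ S, a o : ℤ) : ℝ) = ((∑ o ∈ Sᶜ, a o : ℤ) : ℝ) := by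
          exact_mod_cast hS
        push_cast at this
        linarith
      · have : ((∑ o ∈ S, a o : ℤ) : ℝ) = ((∑ o ∈ Sᶜ, a o : ℤ) : ℝ) := by
          exact_mod_cast hS
        push_cast at this
        simp only [Finset.sum_add_distrib]
        linarith
end

section
/- For two agents with non-degenerate valuations over pure goods, in any fractionally Pareto-optimal allocation z there exists an index o ∈ {0,1,...,m} (after sorting goods in strictly decreasing order of v_{1,o}/v_{2,o}) such that agent 1 fully receives goods 1,...,o−1, agent 2 fully receives goods o+1,...,m, and at most good o is shared. In particular at most one good is shared. -/
open Finset

lemma sum_two_support {m : ℕ} (o o' : Fin m) (hne : o ≠ o') (w : Fin m → ℝ)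
    (h : ∀ p, p ≠ o → p ≠ o' → w p = 0) : ∑ p, w p = w o + w o' := by
  rw [← Finset.sum_pair hne]
  refine (Finset.sum_subset (Finset.subset_univ _) ?_).symm
  intro p _ hp
  simp only [Finset.mem_insert, Finset.mem_singleton, not_or] at hp
  exact h p hp.1 hp.2

/-- Key exchange lemma. -/
lemma key_lemma {m : ℕ} (v z : Fin 2 → Fin m → ℝ)
    (hpos : ∀ i o, 0 < v i o)
    (hsorted : ∀ o o' : Fin m, o < o' → v 0 o' / v 1 o' < v 0 o / v 1 o)
    (hz : IsAllocation z) (hfpo : IsFPO v z)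
    (o o' : Fin m) (hlt : o < o') (h1 : 0 < z 1 o) (h2 : 0 < z 0 o') : False := by
  obtain ⟨hnn, hsum⟩ := hz
  have hne : o ≠ o' := ne_of_lt hlt
  have hne' : o' ≠ o := Ne.symm hne
  set ε := min (z 1 o) (z 0 o' * v 0 o' / v 0 o) with hε
  set δ := ε * v 0 o / v 0 o' with hδ
  have hv00 := hpos 0 o
  have hv00' := hpos 0 o'
  have hv10 := hpos 1 o
  have hv10' := hpos 1 o'
  have hεpos : 0 < ε := lt_min h1 (by positivity)
  have hδpos : 0 < δ := by positivity
  have hεle : ε ≤ z 1 o := min_le_left _ _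
  have hδle : δ ≤ z 0 o' := by
    have h' : ε ≤ z 0 o' * v 0 o' / v 0 o := min_le_right _ _
    rw [hδ, div_le_iff₀ hv00']
    calc ε * v 0 o ≤ (z 0 o' * v 0 o' / v 0 o) * v 0 o := by nlinarith
    _ = z 0 o' * v 0 o' := by field_simp
  -- the improving allocation
  set y : Fin 2 → Fin m → ℝ := fun i p =>
    if p = o then (if i = 0 then z 0 o + ε else z 1 o - ε)
    else if p = o' then (if i = 0 then z 0 o' - δ else z 1 o' + δ)
    else z i p with hy
  have hy0o : y 0 o = z 0 o + ε := by simp [hy]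
  have hy1o : y 1 o = z 1 o - ε := by simp [hy]
  have hy0o' : y 0 o' = z 0 o' - δ := by simp [hy, hne']
  have hy1o' : y 1 o' = z 1 o' + δ := by simp [hy, hne']
  have hcross : v 0 o' * v 1 o < v 0 o * v 1 o' := by
    have hratio : v 0 o' / v 1 o' < v 0 o / v 1 o := hsorted o o' hlt
    rw [div_lt_div_iff₀ hv10' hv10] at hratio; linarith
  have hgain0 : v 0 o * ε = v 0 o' * δ := by rw [hδ]; field_simp
  have hgain1 : v 1 o * ε < v 1 o' * δ := by
    rw [hδ, ← mul_div_assoc, lt_div_iff₀ hv00']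
    nlinarith
  clear_value ε δ
  have hdiff : ∀ i, utility v y i = utility v z i +
      (v i o * (y i o - z i o) + v i o' * (y i o' - z i o')) := by
    intro i
    have h0 : ∑ p, (v i p * y i p - v i p * z i p)
        = v i o * (y i o - z i o) + v i o' * (y i o' - z i o') := by
      have := sum_two_support o o' hne (fun p => v i p * y i p - v i p * z i p)
        (by intro p hp hp'; simp only [hy, if_neg hp, if_neg hp']; ring)
      rw [this]; ring
    have : utility v y i - utility v z i
        = v i o * (y i o - z i o) + v i o' * (y i o' - z i o') := by
      rw [← h0, utility, utility, ← Finset.sum_sub_distrib]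
    linarith
  have hd0 : utility v y 0 = utility v z 0 := by
    rw [hdiff 0, hy0o, hy0o']; linear_combination hgain0
  have hd1 : utility v z 1 < utility v y 1 := by
    rw [hdiff 1, hy1o, hy1o']; nlinarith [hgain1]
  apply hfpo
  refine ⟨y, ⟨?_, ?_⟩, ?_, ⟨1, hd1⟩⟩
  · -- nonneg
    intro i p
    simp only [hy]
    split_ifs <;>
      first
      | exact hnn i p
      | linarith [hnn 0 o, hnn 1 o, hnn 0 o', hnn 1 o']
  · -- column sums
    intro p
    rw [Fin.sum_univ_two]
    have hcol := hsum p
    rw [Fin.sum_univ_two] at hcol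
    by_cases hpo : p = o
    · subst hpo; rw [hy0o, hy1o]; linarith
    · by_cases hpo' : p = o'
      · subst hpo'; rw [hy0o', hy1o']; linarith
      · simp only [hy, if_neg hpo, if_neg hpo']; exact hcol
  · intro i
    fin_cases i
    · exact le_of_eq hd0.symm
    · exact le_of_lt hd1

/-- For two agents with pure goods sorted strictly by value-ratio, any fPO allocation
is a prefix to agent 1, a postfix to agent 2, with at most one (threshold) good shared. -/
theorem stmt11 {m : ℕ} (v z : Fin 2 → Fin m → ℝ)
    (hpos : ∀ i o, 0 < v i o)
    (hsorted : ∀ o o' : Fin m, o < o' → v 0 o' / v 1 o' < v 0 o / v 1 o)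
    (hz : IsAllocation z) (hfpo : IsFPO v z) :
    ∃ k : ℕ, k ≤ m ∧
      (∀ o : Fin m, (o : ℕ) < k → z 0 o = 1) ∧
      (∀ o : Fin m, k < (o : ℕ) → z 1 o = 1) := by
  obtain ⟨hnn, hsum⟩ := hz
  have hcol : ∀ o, z 0 o + z 1 o = 1 := by
    intro o; have := hsum o; rwa [Fin.sum_univ_two] at this
  have key := key_lemma v z hpos hsorted ⟨hnn, hsum⟩ hfpo
  set S := Finset.univ.filter (fun o : Fin m => 0 < z 1 o) with hS
  by_cases hSne : S.Nonempty
  · set μ := S.min' hSne with hμ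
    have hμS : μ ∈ S := S.min'_mem hSne
    have hμpos : 0 < z 1 μ := (Finset.mem_filter.mp hμS).2
    refine ⟨(μ : ℕ), le_of_lt μ.isLt, ?_, ?_⟩
    · intro o ho
      have hoS : o ∉ S := by
        intro hoS
        have := S.min'_le o hoS
        rw [← hμ] at this
        exact absurd (Fin.lt_def.mpr ho) (not_lt.mpr this)
      have : ¬ 0 < z 1 o := by
        intro h; exact hoS (Finset.mem_filter.mpr ⟨Finset.mem_univ _, h⟩)
      have hz1 : z 1 o = 0 := le_antisymm (not_lt.mp this) (hnn 1 o)
      have := hcol o; linarith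
    · intro o ho
      have hlt : μ < o := Fin.lt_def.mpr ho
      by_contra h
      have hz0 : 0 < z 0 o := by
        have := hcol o
        cases' lt_or_eq_of_le (hnn 0 o) with h' h'
        · exact h'
        · exfalso; apply h; linarith
      exact key μ o hlt hμpos hz0
  · refine ⟨m, le_refl m, ?_, ?_⟩
    · intro o _
      have hoS : o ∉ S := fun h => hSne ⟨o, h⟩
      have : ¬ 0 < z 1 o := by
        intro h; exact hoS (Finset.mem_filter.mpr ⟨Finset.mem_univ _, h⟩)
      have hz1 : z 1 o = 0 := le_antisymm (not_lt.mp this) (hnn 1 o)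
      have := hcol o; linarith
    · intro o ho
      exact absurd o.isLt (not_lt.mpr (le_of_lt ho))
end

section
/- For two agents with valuations over m objects and degree of degeneracy D(v), the number of distinct undirected consumption graphs of fractionally Pareto-optimal allocations is at most 3m·3^{D(v)}. -/
open Finset

/-! An fPO allocation admits no small feasible transfer that helps one agent without hurting the
other. Testing this on transfers of one or two objects pins down a price ratio `r > 0` such
that agent `0` only consumes objects with `v 0 o ≥ r * v 1 o` and agent `1` only those with
`v 0 o ≤ r * v 1 o`; moreover `r` can be chosen among the at most `m` positive ratios
`v 0 o / v 1 o`. Once `r` is fixed, the consumption graph is determined off the tie set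
`{o | v 0 o = r * v 1 o}`, of size at most `D + 1`, and on each tie there are three possibilities,
so at most `m * 3 ^ (D + 1)` graphs occur. -/

open Filter Topology Matrix

lemma eventually_nonneg_add_mul_s14 {x y : ℝ} (hx : 0 ≤ x) (hy : y < 0 → 0 < x) :
    ∀ᶠ t in 𝓝[>] 0, 0 ≤ x + t * y := by
  rcases hx.lt_or_eq with hx | rfl
  · have : Tendsto (fun t : ℝ => x + t * y) (𝓝 0) (𝓝 x) :=
      (continuous_const.add (continuous_id.mul continuous_const)).tendsto' 0 x (by simp)
    exact nhdsWithin_le_nhds ((this.eventually (eventually_gt_nhds hx)).mono fun _ => le_of_lt)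
  · have hy : 0 ≤ y := not_lt.1 fun h => (hy h).false
    filter_upwards [self_mem_nhdsWithin] with t ht
    simpa using mul_nonneg (le_of_lt ht) hy

lemma le_mul_of_div_bounds {a b r : ℝ} (hzero : b = 0 → a ≤ 0)
    (hpos : 0 < b → a / b ≤ r) (hneg : b < 0 → r ≤ a / b) : a ≤ r * b := by
  rcases lt_trichotomy b 0 with hb | hb | hb
  · exact (le_div_iff_of_neg hb).1 (hneg hb)
  · simpa [hb] using hzero hb
  · exact (div_le_iff₀ hb).1 (hpos hb)

/-- The hypothesis says that the cone spanned by the vectors `(A i, B i)` misses the quadrant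
`{x ≥ 0, y ≤ 0}` away from the origin. The witness is the least slope `A i / B i` bounding `r`
from above, otherwise the largest positive slope bounding it from below, otherwise `r₀`. -/
theorem exists_le_mul_of_forall_pair {ι : Type*} (s : Finset ι) (A B : ι → ℝ)
    (h : ∀ i ∈ s, ∀ j ∈ s, ∀ a b : ℝ, 0 ≤ a → 0 ≤ b →
      0 ≤ a * A i + b * A j → a * B i + b * B j ≤ 0 → a * A i + b * A j = 0 ∧ a * B i + b * B j = 0)
    {r₀ : ℝ} (hr₀ : 0 < r₀) :
    ∃ r, (r = r₀ ∨ ∃ i ∈ s, 0 < A i / B i ∧ r = A i / B i) ∧ ∀ i ∈ s, A i ≤ r * B i := by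
  have hzero : ∀ i ∈ s, B i = 0 → A i ≤ 0 := fun i hi hB => by
    by_contra! hA
    have := h i hi i hi 1 0 zero_le_one le_rfl (by linarith) (by simp [hB])
    linarith [this.1]
  have hneg : ∀ i ∈ s, B i < 0 → A i < 0 := fun i hi hB => by
    by_contra! hA
    have := h i hi i hi 1 0 zero_le_one le_rfl (by linarith) (by linarith)
    linarith [this.2]
  have hcross : ∀ i ∈ s, ∀ j ∈ s, 0 < B i → B j < 0 → A i / B i ≤ A j / B j := by
    intro i hi j hj hBi hBj
    by_contra! hlt
    obtain ⟨x, hx⟩ : ∃ x, A i = x * B i := ⟨A i / B i, (div_mul_cancel₀ _ hBi.ne').symm⟩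
    obtain ⟨y, hy⟩ : ∃ y, A j = y * B j := ⟨A j / B j, (div_mul_cancel₀ _ hBj.ne).symm⟩
    rw [hx, hy, mul_div_cancel_right₀ _ hBi.ne', mul_div_cancel_right₀ _ hBj.ne] at hlt
    have hX : 0 < -B j * A i + B i * A j := by
      rw [hx, hy]; nlinarith [mul_neg_of_pos_of_neg hBi hBj]
    have := h i hi j hj (-B j) (B i) (by linarith) hBi.le hX.le (by linarith)
    linarith [this.1]
  by_cases hU : (s.filter (B · < 0)).Nonempty
  · obtain ⟨j, hj, hmin⟩ := exists_min_image _ (fun i => A i / B i) hU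
    obtain ⟨hjs, hBj⟩ := mem_filter.1 hj
    have hr : 0 < A j / B j := div_pos_of_neg_of_neg (hneg j hjs hBj) hBj
    refine ⟨A j / B j, .inr ⟨j, hjs, hr, rfl⟩, fun i hi => le_mul_of_div_bounds (hzero i hi)
      (fun hBi => hcross i hi j hjs hBi hBj) (fun hBi => hmin i (mem_filter.2 ⟨hi, hBi⟩))⟩
  have hBnonneg : ∀ i ∈ s, ¬ B i < 0 := fun i hi hBi => hU ⟨i, mem_filter.2 ⟨hi, hBi⟩⟩
  by_cases hL : (s.filter fun i => 0 < A i / B i).Nonempty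
  · obtain ⟨j, hj, hmax⟩ := exists_max_image _ (fun i => A i / B i) hL
    obtain ⟨hjs, hr⟩ := mem_filter.1 hj
    refine ⟨A j / B j, .inr ⟨j, hjs, hr, rfl⟩, fun i hi => le_mul_of_div_bounds (hzero i hi)
      (fun _ => ?_) (fun hBi => absurd hBi (hBnonneg i hi))⟩
    by_cases hAi : 0 < A i / B i
    · exact hmax i (mem_filter.2 ⟨hi, hAi⟩)
    · linarith
  · refine ⟨r₀, .inl rfl, fun i hi => le_mul_of_div_bounds (hzero i hi)
      (fun _ => ?_) (fun hBi => absurd hBi (hBnonneg i hi))⟩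
    by_contra! hlt
    exact hL ⟨i, mem_filter.2 ⟨hi, hr₀.trans hlt⟩⟩

variable {m : ℕ}

/-- `c o > 0` hands part of object `o` from agent `1` to agent `0`, `c o < 0` the other way;
a small enough multiple of `c` keeps an allocation feasible. -/
def IsFeasibleDirection (z : Fin 2 → Fin m → ℝ) (c : Fin m → ℝ) : Prop :=
  ∀ o, (c o < 0 → 0 < z 0 o) ∧ (0 < c o → 0 < z 1 o)

namespace IsFeasibleDirection

variable {z : Fin 2 → Fin m → ℝ} {c d : Fin m → ℝ}

lemma add (hc : IsFeasibleDirection z c) (hd : IsFeasibleDirection z d) :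
    IsFeasibleDirection z (c + d) := fun o => by
  constructor <;> intro h <;> simp only [Pi.add_apply] at h
  · by_cases hco : c o < 0
    · exact (hc o).1 hco
    · exact (hd o).1 (by linarith)
  · by_cases hco : 0 < c o
    · exact (hc o).2 hco
    · exact (hd o).2 (by linarith)

lemma smul (hc : IsFeasibleDirection z c) {a : ℝ} (ha : 0 ≤ a) :
    IsFeasibleDirection z (a • c) := fun o => by
  simp only [Pi.smul_apply, smul_eq_mul]
  exact ⟨fun h => (hc o).1 (neg_of_mul_neg_right h ha),
    fun h => (hc o).2 (pos_of_mul_pos_right h ha)⟩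

lemma exists_isAllocation (hz : IsAllocation z) (hc : IsFeasibleDirection z c) :
    ∃ t : ℝ, 0 < t ∧ IsAllocation ![z 0 + t • c, z 1 - t • c] := by
  have h := eventually_all.2 fun o => (eventually_nonneg_add_mul_s14 (hz.1 0 o) (hc o).1).and
    (eventually_nonneg_add_mul_s14 (y := -c o) (hz.1 1 o) fun h => (hc o).2 (by linarith))
  obtain ⟨t, ht, ht0⟩ := (h.and self_mem_nhdsWithin).exists
  refine ⟨t, ht0, fun i o => ?_, fun o => ?_⟩
  · fin_cases i
    · simpa using (ht o).1
    · simpa [sub_eq_add_neg] using (ht o).2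
  · simpa [Fin.sum_univ_two] using hz.2 o

end IsFeasibleDirection

lemma isFeasibleDirection_single {z : Fin 2 → Fin m → ℝ} {i : Fin 2} {o : Fin m}
    (h : 0 < z i o) : IsFeasibleDirection z (Pi.single o (![-1, 1] i)) := fun p => by
  rcases eq_or_ne p o with rfl | hp
  · fin_cases i <;> simp_all
  · simp [hp]

theorem IsFPO.eq_zero_of_isFeasibleDirection {v z : Fin 2 → Fin m → ℝ} (hz : IsAllocation z)
    (hf : IsFPO v z) {c : Fin m → ℝ} (hc : IsFeasibleDirection z c) (h0 : 0 ≤ v 0 ⬝ᵥ c)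
    (h1 : v 1 ⬝ᵥ c ≤ 0) : v 0 ⬝ᵥ c = 0 ∧ v 1 ⬝ᵥ c = 0 := by
  obtain ⟨t, ht, hy⟩ := hc.exists_isAllocation hz
  have hu0 : utility v ![z 0 + t • c, z 1 - t • c] 0 = utility v z 0 + t * (v 0 ⬝ᵥ c) :=
    show v 0 ⬝ᵥ (z 0 + t • c) = _ by rw [dotProduct_add, dotProduct_smul, smul_eq_mul]; rfl
  have hu1 : utility v ![z 0 + t • c, z 1 - t • c] 1 = utility v z 1 - t * (v 1 ⬝ᵥ c) :=
    show v 1 ⬝ᵥ (z 1 - t • c) = _ by rw [dotProduct_sub, dotProduct_smul, smul_eq_mul]; rfl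
  by_contra hne
  refine hf ⟨_, hy, fun i => ?_, ?_⟩
  · fin_cases i
    · simp only [Fin.zero_eta, hu0]; nlinarith
    · simp only [Fin.mk_one, hu1]; nlinarith
  · rcases not_and_or.1 hne with h | h
    · exact ⟨0, by rw [hu0]; nlinarith [lt_of_le_of_ne h0 (Ne.symm h)]⟩
    · exact ⟨1, by rw [hu1]; nlinarith [lt_of_le_of_ne h1 h]⟩

def RespectsThreshold (v : Fin 2 → Fin m → ℝ) (r : ℝ) (P : Fin 2 → Fin m → Prop) : Prop :=
  ∀ o, (P 0 o → r * v 1 o ≤ v 0 o) ∧ (P 1 o → v 0 o ≤ r * v 1 o)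

/-- A ratio that is not positive (including the junk value `v 0 o / 0 = 0`) never pins the
threshold; `1` is a placeholder for it. -/
noncomputable def thresholdCandidate (v : Fin 2 → Fin m → ℝ) (o : Fin m) : ℝ :=
  if 0 < v 0 o / v 1 o then v 0 o / v 1 o else 1

lemma thresholdCandidate_pos (v : Fin 2 → Fin m → ℝ) (o : Fin m) : 0 < thresholdCandidate v o := by
  unfold thresholdCandidate
  split_ifs with h
  exacts [h, one_pos]

theorem IsFPO.exists_respectsThreshold {v z : Fin 2 → Fin m → ℝ} (hz : IsAllocation z)
    (hf : IsFPO v z) (o₀ : Fin m) :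
    ∃ o, RespectsThreshold v (thresholdCandidate v o) fun i p => 0 < z i p := by
  classical
  -- A held pair `(o, i)` gives the direction handing `o` away from agent `i`, of sign `σ i`.
  set σ : Fin 2 → ℝ := ![-1, 1]
  set held := univ.filter fun q : Fin m × Fin 2 => 0 < z q.2 q.1
  have hdot : ∀ (p q : Fin m × Fin 2) (a b : ℝ) k,
      v k ⬝ᵥ (a • Pi.single p.1 (σ p.2) + b • Pi.single q.1 (σ q.2)) =
        a * (σ p.2 * v k p.1) + b * (σ q.2 * v k q.1) := by
    intro p q a b k
    rw [dotProduct_add, dotProduct_smul, dotProduct_smul, dotProduct_single, dotProduct_single,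
      smul_eq_mul, smul_eq_mul, mul_comm (v k p.1), mul_comm (v k q.1)]
  obtain ⟨r, hr, hle⟩ := exists_le_mul_of_forall_pair held (fun q => σ q.2 * v 0 q.1)
    (fun q => σ q.2 * v 1 q.1) (fun p hp q hq a b ha hb h0 h1 => by
      have hc : IsFeasibleDirection z (a • Pi.single p.1 (σ p.2) + b • Pi.single q.1 (σ q.2)) :=
        ((isFeasibleDirection_single (mem_filter.1 hp).2).smul ha).add
        ((isFeasibleDirection_single (mem_filter.1 hq).2).smul hb)
      simpa only [hdot] using
        hf.eq_zero_of_isFeasibleDirection hz hc (by rwa [hdot]) (by rwa [hdot]))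
    (thresholdCandidate_pos v o₀)
  have hresp : RespectsThreshold v r fun i p => 0 < z i p := fun o => by
    constructor <;> intro h
    · have := hle (o, 0) (mem_filter.2 ⟨mem_univ _, h⟩)
      simp only [σ, Matrix.cons_val_zero] at this
      linarith
    · have := hle (o, 1) (mem_filter.2 ⟨mem_univ _, h⟩)
      simpa [σ] using this
  rcases hr with rfl | ⟨q, -, hpos, rfl⟩
  · exact ⟨o₀, hresp⟩
  · have hσ : σ q.2 ≠ 0 := by obtain ⟨_, i⟩ := q; fin_cases i <;> simp [σ]
    rw [mul_div_mul_left _ _ hσ] at hpos hresp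
    exact ⟨q.1, by rwa [thresholdCandidate, if_pos hpos]⟩

def thresholdGraphs (v : Fin 2 → Fin m → ℝ) (r : ℝ) : Set (Fin 2 → Fin m → Bool) :=
  {g | (∀ o, g 0 o = true ∨ g 1 o = true) ∧ RespectsThreshold v r fun i o => g i o = true}

section thresholdGraphs

variable {v : Fin 2 → Fin m → ℝ} {r : ℝ} {g : Fin 2 → Fin m → Bool} {o : Fin m}

lemma apply_of_lt_of_mem_thresholdGraphs (hg : g ∈ thresholdGraphs v r)
    (h : v 0 o < r * v 1 o) : g 0 o = false ∧ g 1 o = true := by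
  have h0 : g 0 o = false := by
    by_contra h0
    linarith [(hg.2 o).1 (by simpa using h0)]
  exact ⟨h0, by simpa [h0] using hg.1 o⟩

lemma apply_of_gt_of_mem_thresholdGraphs (hg : g ∈ thresholdGraphs v r)
    (h : r * v 1 o < v 0 o) : g 0 o = true ∧ g 1 o = false := by
  have h1 : g 1 o = false := by
    by_contra h1
    linarith [(hg.2 o).2 (by simpa using h1)]
  exact ⟨by simpa [h1] using hg.1 o, h1⟩

lemma apply_eq_of_mem_thresholdGraphs {g' : Fin 2 → Fin m → Bool} (hg : g ∈ thresholdGraphs v r)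
    (hg' : g' ∈ thresholdGraphs v r) (ho : v 0 o ≠ r * v 1 o) (i : Fin 2) : g i o = g' i o := by
  rcases ho.lt_or_gt with h | h
  · obtain ⟨h0, h1⟩ := apply_of_lt_of_mem_thresholdGraphs hg h
    obtain ⟨h0', h1'⟩ := apply_of_lt_of_mem_thresholdGraphs hg' h
    fin_cases i <;> simp [h0, h1, h0', h1']
  · obtain ⟨h0, h1⟩ := apply_of_gt_of_mem_thresholdGraphs hg h
    obtain ⟨h0', h1'⟩ := apply_of_gt_of_mem_thresholdGraphs hg' h
    fin_cases i <;> simp [h0, h1, h0', h1']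

end thresholdGraphs

theorem ncard_thresholdGraphs_le (v : Fin 2 → Fin m → ℝ) (r : ℝ) :
    (thresholdGraphs v r).ncard ≤ 3 ^ (univ.filter fun o => v 0 o = r * v 1 o).card := by
  classical
  set E := univ.filter fun o => v 0 o = r * v 1 o
  let φ : (Fin 2 → Fin m → Bool) → E → Bool × Bool := fun g o => (g 0 o, g 1 o)
  have hmaps : Set.MapsTo φ (thresholdGraphs v r)
      (Fintype.piFinset fun _ : E => univ.erase (false, false)) := fun g hg => by
    rw [mem_coe, Fintype.mem_piFinset]
    intro o
    rcases hg.1 o with h | h <;> simp [φ, h]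
  have hinj : Set.InjOn φ (thresholdGraphs v r) := fun g hg g' hg' hφ => by
    ext i o
    by_cases ho : o ∈ E
    · have := congrFun hφ ⟨o, ho⟩
      fin_cases i
      · exact congrArg Prod.fst this
      · exact congrArg Prod.snd this
    · exact apply_eq_of_mem_thresholdGraphs hg hg' (by simpa [E] using ho) i
  calc (thresholdGraphs v r).ncard
      ≤ (Fintype.piFinset fun _ : E => univ.erase (false, false) : Set (E → Bool × Bool)).ncard :=
        Set.ncard_le_ncard_of_injOn φ hmaps hinj (Set.toFinite _)
    _ = 3 ^ E.card := by rw [Set.ncard_coe_finset, Fintype.card_piFinset]; simp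

lemma mem_thresholdGraphs_of_isAllocation {v z : Fin 2 → Fin m → ℝ} {r : ℝ}
    {g : Fin 2 → Fin m → Bool} (hz : IsAllocation z) (hg : ∀ i o, g i o = true ↔ 0 < z i o)
    (hr : RespectsThreshold v r fun i o => 0 < z i o) : g ∈ thresholdGraphs v r := by
  have hgz : (fun i o => g i o = true) = fun i o => 0 < z i o := by
    ext i o
    exact hg i o
  refine ⟨fun o => ?_, hgz ▸ hr⟩
  simp only [hg]
  by_contra! h
  have := hz.2 o
  rw [Fin.sum_univ_two] at this
  linarith [h.1, h.2]

/-- For two agents, the number of undirected consumption graphs of fPO allocations is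
at most 3m·3^D. -/
theorem stmt14 {m : ℕ} (hm : 0 < m) (v : Fin 2 → Fin m → ℝ) (D : ℕ)
    (hD : ∀ r : ℝ, 0 < r →
      (Finset.univ.filter (fun o : Fin m => v 0 o = r * v 1 o)).card ≤ D + 1) :
    Set.ncard {g : Fin 2 → Fin m → Bool |
        ∃ z, IsAllocation z ∧ IsFPO v z ∧ ∀ i o, g i o = true ↔ 0 < z i o}
      ≤ 3 * m * 3 ^ D := by
  have hsub : {g : Fin 2 → Fin m → Bool |
        ∃ z, IsAllocation z ∧ IsFPO v z ∧ ∀ i o, g i o = true ↔ 0 < z i o} ⊆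
      ⋃ o, thresholdGraphs v (thresholdCandidate v o) := by
    rintro g ⟨z, hz, hf, hg⟩
    obtain ⟨o, ho⟩ := hf.exists_respectsThreshold hz ⟨0, hm⟩
    exact Set.mem_iUnion.2 ⟨o, mem_thresholdGraphs_of_isAllocation hz hg ho⟩
  calc _ ≤ (⋃ o, thresholdGraphs v (thresholdCandidate v o)).ncard :=
        Set.ncard_le_ncard hsub (Set.toFinite _)
    _ ≤ ∑ o, (thresholdGraphs v (thresholdCandidate v o)).ncard :=
        Set.ncard_iUnion_le_of_fintype _
    _ ≤ ∑ _o : Fin m, 3 ^ (D + 1) := sum_le_sum fun o _ => (ncard_thresholdGraphs_le v _).trans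
        (Nat.pow_le_pow_right three_pos (hD _ (thresholdCandidate_pos v o)))
    _ = 3 * m * 3 ^ D := by simp [pow_succ]; ring
end

section
/- Every fractionally Pareto-optimal allocation z' among k+1 agents can be obtained from a fractionally Pareto-optimal allocation z among the first k agents by transferring to agent k+1, for each object, shares that z allocated to old agents: specifically, defining z by giving the share z'_{k+1,o} of each object o to some old agent i maximizing λ_i v_{i,o} (where λ is a welfare-weight certificate for z') yields an fPO allocation for the k agents. -/
open Finset

/-- Transferring the newcomer's shares back to welfare-weight-maximizing old agents turns
an fPO allocation among k+1 agents into an fPO allocation among the first k agents. -/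
theorem stmt16 {k m : ℕ} (hk : 0 < k) (v : Fin (k + 1) → Fin m → ℝ)
    (z' : Fin (k + 1) → Fin m → ℝ) (hz' : IsAllocation z')
    (lam : Fin (k + 1) → ℝ) (hlam : ∀ i, 0 < lam i)
    (hcert : ∀ i o, 0 < z' i o → ∀ j, lam j * v j o ≤ lam i * v i o)
    (σ : Fin m → Fin k)
    (hσ : ∀ o, ∀ j : Fin k,
      lam j.castSucc * v j.castSucc o ≤ lam (σ o).castSucc * v (σ o).castSucc o) :
    IsAllocation (fun (i : Fin k) (o : Fin m) =>
        z' i.castSucc o + if σ o = i then z' (Fin.last k) o else 0) ∧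
    IsFPO (fun (i : Fin k) => v i.castSucc)
      (fun (i : Fin k) (o : Fin m) =>
        z' i.castSucc o + if σ o = i then z' (Fin.last k) o else 0) := by
  obtain ⟨hpos, hsum⟩ := hz'
  have hsum' : ∀ o, (∑ i : Fin k, z' i.castSucc o) + z' (Fin.last k) o = 1 := by
    intro o
    have := hsum o
    rwa [Fin.sum_univ_castSucc] at this
  have halloc : IsAllocation (fun (i : Fin k) (o : Fin m) =>
      z' i.castSucc o + if σ o = i then z' (Fin.last k) o else 0) := by
    constructor
    · intro i o
      have h1 := hpos i.castSucc o
      have h2 := hpos (Fin.last k) o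
      dsimp only
      split <;> linarith
    · intro o
      dsimp only
      rw [Finset.sum_add_distrib, Finset.sum_ite_eq Finset.univ (σ o)]
      simp only [Finset.mem_univ, if_true]
      exact hsum' o
  refine ⟨halloc, ?_⟩
  rintro ⟨y, hy, hle, i0, hlt⟩
  set M : Fin m → ℝ := fun o => lam (σ o).castSucc * v (σ o).castSucc o with hM
  have hswap : ∀ w : Fin k → Fin m → ℝ,
      ∑ i, lam i.castSucc * utility (fun i => v i.castSucc) w i
        = ∑ o, ∑ i, lam i.castSucc * v i.castSucc o * w i o := by
    intro w
    rw [Finset.sum_comm]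
    apply Finset.sum_congr rfl
    intro i _
    rw [utility, Finset.mul_sum]
    apply Finset.sum_congr rfl
    intros; ring
  have hWy : ∑ i, lam i.castSucc * utility (fun i => v i.castSucc) y i ≤ ∑ o, M o := by
    rw [hswap]
    apply Finset.sum_le_sum
    intro o _
    calc ∑ i, lam i.castSucc * v i.castSucc o * y i o
        ≤ ∑ i : Fin k, M o * y i o :=
          Finset.sum_le_sum (fun i _ => mul_le_mul_of_nonneg_right (hσ o i) (hy.1 i o))
      _ = M o * ∑ i, y i o := by rw [Finset.mul_sum]
      _ = M o := by rw [hy.2 o, mul_one]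
  have hWz : ∑ i, lam i.castSucc * utility (fun i => v i.castSucc)
      (fun (i : Fin k) (o : Fin m) =>
        z' i.castSucc o + if σ o = i then z' (Fin.last k) o else 0) i = ∑ o, M o := by
    rw [hswap]
    apply Finset.sum_congr rfl
    intro o _
    have step1 : ∑ i : Fin k, lam i.castSucc * v i.castSucc o *
        (z' i.castSucc o + if σ o = i then z' (Fin.last k) o else 0)
        = (∑ i : Fin k, lam i.castSucc * v i.castSucc o * z' i.castSucc o)
          + M o * z' (Fin.last k) o := by
      simp only [mul_add, mul_ite, mul_zero, Finset.sum_add_distrib,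
        Finset.sum_ite_eq Finset.univ (σ o), Finset.mem_univ, if_true, hM]
    have step2 : ∑ i : Fin k, lam i.castSucc * v i.castSucc o * z' i.castSucc o
        = ∑ i : Fin k, M o * z' i.castSucc o := by
      apply Finset.sum_congr rfl
      intro i _
      rcases eq_or_lt_of_le (hpos i.castSucc o) with h | h
      · rw [← h, mul_zero, mul_zero]
      · have h1 : M o ≤ lam i.castSucc * v i.castSucc o :=
          hcert i.castSucc o h (σ o).castSucc
        have h2 := hσ o i
        rw [le_antisymm h2 h1]
    rw [step1, step2, ← Finset.mul_sum, ← mul_add, hsum' o, mul_one]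
  have hlt' : ∑ i, lam i.castSucc * utility (fun i => v i.castSucc)
      (fun (i : Fin k) (o : Fin m) =>
        z' i.castSucc o + if σ o = i then z' (Fin.last k) o else 0) i
      < ∑ i, lam i.castSucc * utility (fun i => v i.castSucc) y i := by
    apply Finset.sum_lt_sum
    · intro i _
      exact mul_le_mul_of_nonneg_left (hle i) (hlam i.castSucc).le
    · exact ⟨i0, Finset.mem_univ i0, mul_lt_mul_of_pos_left hlt (hlam i0.castSucc)⟩
  rw [hWz] at hlt'
  exact absurd hWy (not_le.mpr hlt')
end

section
/- The set of consensus allocations for n agents — allocations z with u_i(z_j) = V_i/n for all agents i, j, where V_i = Σ_o v_{i,o} — is nonempty (the equal division belongs to it), and it contains an allocation with at most n(n−1) sharings. -/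
open Finset

/-- A consensus allocation: every agent values every bundle at exactly V_i/n. -/
def IsConsensus {n m : ℕ} (v z : Fin n → Fin m → ℝ) : Prop :=
  ∀ i j : Fin n, (∑ o, v i o * z j o) = (∑ o, v i o) / n


section ConsensusAux
variable {n m : ℕ}

/-- Extension of a function on a support set to a full matrix (as a linear map). -/
def consensusExt (S : Finset (Fin n × Fin m)) :
    ({p // p ∈ S} → ℝ) →ₗ[ℝ] (Fin n × Fin m → ℝ) where
  toFun u p := if h : p ∈ S then u ⟨p, h⟩ else 0
  map_add' a b := by funext p; by_cases h : p ∈ S <;> simp [h]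
  map_smul' c a := by funext p; by_cases h : p ∈ S <;> simp [h]

@[simp] lemma consensusExt_apply (S : Finset (Fin n × Fin m)) (u : {p // p ∈ S} → ℝ)
    (p : Fin n × Fin m) : consensusExt S u p = if h : p ∈ S then u ⟨p, h⟩ else 0 := rfl

/-- The constraint map: column sums and consensus functionals for agents `j ≠ j₀`. -/
def consensusCon (v : Fin n → Fin m → ℝ) (S : Finset (Fin n × Fin m)) (j₀ : Fin n) :
    ({p // p ∈ S} → ℝ) →ₗ[ℝ] ((Fin m → ℝ) × ((Fin n × {j : Fin n // j ≠ j₀}) → ℝ)) where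
  toFun u := (fun o => ∑ i, consensusExt S u (i, o),
    fun q => ∑ o, v q.1 o * consensusExt S u (q.2.1, o))
  map_add' a b := by
    refine Prod.ext ?_ ?_ <;> funext x <;>
      · simp only [consensusExt_apply, Pi.add_apply, Prod.fst_add, Prod.snd_add]
        rw [← Finset.sum_add_distrib]
        refine Finset.sum_congr rfl fun y _ => ?_
        split <;> simp [mul_add]
  map_smul' c a := by
    refine Prod.ext ?_ ?_ <;> funext x <;>
      simp [map_smul, Finset.mul_sum, mul_left_comm]

@[simp] lemma consensusCon_fst (v : Fin n → Fin m → ℝ) (S : Finset (Fin n × Fin m))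
    (j₀ : Fin n) (u : {p // p ∈ S} → ℝ) (o : Fin m) :
    (consensusCon v S j₀ u).1 o = ∑ i, consensusExt S u (i, o) := rfl

@[simp] lemma consensusCon_snd (v : Fin n → Fin m → ℝ) (S : Finset (Fin n × Fin m))
    (j₀ : Fin n) (u : {p // p ∈ S} → ℝ) (q : Fin n × {j : Fin n // j ≠ j₀}) :
    (consensusCon v S j₀ u).2 q = ∑ o, v q.1 o * consensusExt S u (q.2.1, o) := rfl

end ConsensusAux

open Module in
lemma consensus_ker_lemma {V W : Type*} [AddCommGroup V] [Module ℝ V] [AddCommGroup W]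
    [Module ℝ W] [FiniteDimensional ℝ V] [FiniteDimensional ℝ W]
    (f : V →ₗ[ℝ] W) (h : finrank ℝ W < finrank ℝ V) :
    ∃ x : V, x ≠ 0 ∧ f x = 0 := by
  have h1 := LinearMap.finrank_range_add_finrank_ker f
  have h2 : finrank ℝ (LinearMap.range f) ≤ finrank ℝ W := Submodule.finrank_le _
  have h3 : 0 < finrank ℝ (LinearMap.ker f) := by omega
  rw [Module.finrank_pos_iff_exists_ne_zero] at h3
  obtain ⟨⟨x, hx⟩, hne⟩ := h3
  exact ⟨x, by simpa [Subtype.ext_iff] using hne, hx⟩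

/-- The equal division is a consensus allocation, and there is a consensus allocation
with at most n(n-1) sharings. -/
theorem stmt17 {n m : ℕ} (hn : 0 < n) (v : Fin n → Fin m → ℝ) :
    (IsAllocation (fun (_ : Fin n) (_ : Fin m) => (n : ℝ)⁻¹) ∧
      IsConsensus v (fun _ _ => (n : ℝ)⁻¹)) ∧
    ∃ z : Fin n → Fin m → ℝ, IsAllocation z ∧ IsConsensus v z ∧
      sharings z ≤ n * (n - 1) := by
  classical
  have hnR : (0:ℝ) < n := by exact_mod_cast hn
  have hnne : (n:ℝ) ≠ 0 := ne_of_gt hnR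
  have heq : IsAllocation (fun (_ : Fin n) (_ : Fin m) => (n : ℝ)⁻¹) ∧
      IsConsensus v (fun _ _ => (n : ℝ)⁻¹) := by
    refine ⟨⟨fun i o => by positivity, fun o => ?_⟩, fun i j => ?_⟩
    · simp only [Finset.sum_const, card_univ, Fintype.card_fin, nsmul_eq_mul]
      field_simp
    · rw [Finset.sum_div]
      exact Finset.sum_congr rfl fun o _ => by rw [div_eq_mul_inv]
  refine ⟨heq, ?_⟩
  -- the set of consensus allocations, and the support-size function
  set C : (Fin n → Fin m → ℝ) → Prop :=
    fun z => IsAllocation z ∧ IsConsensus v z with hC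
  set N : (Fin n → Fin m → ℝ) → ℕ :=
    fun z => (univ.filter (fun p : Fin n × Fin m => z p.1 p.2 ≠ 0)).card with hNdef
  have hex : ∃ k, ∃ z, C z ∧ N z = k := ⟨_, _, heq, rfl⟩
  obtain ⟨z, hzC, hzk⟩ := Nat.find_spec hex
  have hmin : ∀ z', C z' → Nat.find hex ≤ N z' :=
    fun z' h => Nat.find_min' hex ⟨z', h, rfl⟩
  obtain ⟨⟨hznn, hzcol⟩, hzcons⟩ := hzC
  refine ⟨z, ⟨hznn, hzcol⟩, hzcons, ?_⟩
  set S : Finset (Fin n × Fin m) :=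
    univ.filter (fun p : Fin n × Fin m => z p.1 p.2 ≠ 0) with hS
  -- Key claim: the support of z has at most m + n*(n-1) elements.
  have key : S.card ≤ m + n * (n - 1) := by
    by_contra hbig
    push_neg at hbig
    set j₀ : Fin n := ⟨0, hn⟩ with hj₀
    have hrank : Module.finrank ℝ ((Fin m → ℝ) × ((Fin n × {j : Fin n // j ≠ j₀}) → ℝ))
        < Module.finrank ℝ (↥S → ℝ) := by
      have h1 : Module.finrank ℝ (↥S → ℝ) = S.card := by
        rw [Module.finrank_fintype_fun_eq_card, Fintype.card_coe]
      have hcsub : Fintype.card {j : Fin n // j ≠ j₀} = n - 1 := by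
        have := Fintype.card_subtype_compl (fun j : Fin n => j = j₀)
        simp only [Fintype.card_subtype_eq, Fintype.card_fin] at this
        exact this
      rw [h1, Module.finrank_prod, Module.finrank_fintype_fun_eq_card,
        Module.finrank_fintype_fun_eq_card, Fintype.card_fin, Fintype.card_prod,
        Fintype.card_fin, hcsub]
      omega
    obtain ⟨u, hu0, hTu⟩ := consensus_ker_lemma (consensusCon v S j₀) hrank
    set w : Fin n → Fin m → ℝ := fun i o => consensusExt S u (i, o) with hw
    have hwS : ∀ p : Fin n × Fin m, p ∉ S → w p.1 p.2 = 0 := by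
      intro p hp
      simp only [hw, consensusExt_apply]
      rw [dif_neg hp]
    have hcol : ∀ o, ∑ i, w i o = 0 := by
      intro o
      have := congrFun (congrArg Prod.fst hTu) o
      simpa [hw] using this
    have hconsj : ∀ (i : Fin n) (j : Fin n), j ≠ j₀ → ∑ o, v i o * w j o = 0 := by
      intro i j hj
      have := congrFun (congrArg Prod.snd hTu) (i, ⟨j, hj⟩)
      simpa [hw] using this
    have hcons : ∀ (i j : Fin n), ∑ o, v i o * w j o = 0 := by
      intro i j
      by_cases hj : j = j₀
      · subst hj
        have htot : ∑ j : Fin n, ∑ o, v i o * w j o = 0 := by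
          rw [Finset.sum_comm]
          simp only [← Finset.mul_sum]
          simp [hcol]
        have hsingle : ∑ j : Fin n, ∑ o, v i o * w j o = ∑ o, v i o * w j₀ o := by
          exact Finset.sum_eq_single_of_mem j₀ (mem_univ _)
            (fun b _ hb => hconsj i b hb)
        rw [← hsingle, htot]
      · exact hconsj i j hj
    -- w has a negative entry
    have hwne : ∃ p : Fin n × Fin m, w p.1 p.2 ≠ 0 := by
      by_contra h
      push_neg at h
      apply hu0
      funext s
      have := h (s : Fin n × Fin m)
      simpa [hw, dif_pos s.2] using this
    have hneg : ∃ p : Fin n × Fin m, w p.1 p.2 < 0 := by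
      obtain ⟨p, hp⟩ := hwne
      rcases lt_or_gt_of_ne hp with h | h
      · exact ⟨p, h⟩
      · by_contra hc
        push_neg at hc
        have hpos : 0 < ∑ i, w i p.2 :=
          Finset.sum_pos' (fun i _ => hc (i, p.2)) ⟨p.1, mem_univ _, h⟩
        rw [hcol] at hpos
        exact lt_irrefl _ hpos
    set Neg : Finset (Fin n × Fin m) :=
      univ.filter (fun p : Fin n × Fin m => w p.1 p.2 < 0) with hNeg
    have hNegne : Neg.Nonempty := by
      obtain ⟨p, hp⟩ := hneg
      exact ⟨p, by simp [hNeg, hp]⟩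
    have hmemS : ∀ p ∈ Neg, p ∈ S := by
      intro p hp
      rw [hNeg, mem_filter] at hp
      rw [hS, mem_filter]
      refine ⟨mem_univ _, ?_⟩
      by_contra h
      have := hwS p (by simp [hS, h])
      linarith [hp.2]
    have hzpos : ∀ p ∈ Neg, 0 < z p.1 p.2 := by
      intro p hp
      have hpS := hmemS p hp
      rw [hS, mem_filter] at hpS
      exact lt_of_le_of_ne (hznn p.1 p.2) (Ne.symm hpS.2)
    set t : ℝ := Neg.inf' hNegne (fun p => z p.1 p.2 / (-(w p.1 p.2))) with ht
    have htpos : 0 < t := by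
      rw [ht, Finset.lt_inf'_iff]
      intro p hp
      rw [hNeg, mem_filter] at hp
      exact div_pos (hzpos p (by rwa [hNeg, mem_filter])) (by linarith [hp.2])
    set z' : Fin n → Fin m → ℝ := fun i o => z i o + t * w i o with hz'
    have hz'nn : ∀ i o, 0 ≤ z' i o := by
      intro i o
      rcases le_or_gt 0 (w i o) with h | h
      · exact add_nonneg (hznn i o) (mul_nonneg htpos.le h)
      · have hmem : (i, o) ∈ Neg := by simp [hNeg, h]
        have hle : t ≤ z i o / (-(w i o)) := Finset.inf'_le _ hmem
        have h2 : t * (-(w i o)) ≤ z i o := by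
          rw [← le_div_iff₀ (by linarith : (0:ℝ) < -(w i o))]
          exact hle
        rw [mul_neg] at h2
        simp only [hz']
        linarith
    have hz'col : ∀ o, ∑ i, z' i o = 1 := by
      intro o
      simp only [hz', Finset.sum_add_distrib, ← Finset.mul_sum, hcol, hzcol, mul_zero,
        add_zero]
    have hz'cons : IsConsensus v z' := by
      intro i j
      have hsplit : ∑ o, v i o * z' j o
          = (∑ o, v i o * z j o) + t * ∑ o, v i o * w j o := by
        rw [Finset.mul_sum, ← Finset.sum_add_distrib]
        refine Finset.sum_congr rfl (fun o _ => ?_)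
        simp only [hz']
        ring
      rw [hsplit, hcons, mul_zero, add_zero, hzcons]
    -- the support strictly shrinks
    obtain ⟨p₀, hp₀mem, hp₀eq⟩ := Finset.exists_mem_eq_inf' hNegne
      (fun p => z p.1 p.2 / (-(w p.1 p.2)))
    have hp₀neg : w p₀.1 p₀.2 < 0 := by
      have := hp₀mem; rw [hNeg, mem_filter] at this; exact this.2
    have hp₀zero : z' p₀.1 p₀.2 = 0 := by
      simp only [hz', ht, hp₀eq]
      have hwne0 : w p₀.1 p₀.2 ≠ 0 := ne_of_lt hp₀neg
      have h4 : z p₀.1 p₀.2 / w p₀.1 p₀.2 * w p₀.1 p₀.2 = z p₀.1 p₀.2 :=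
        div_mul_cancel₀ _ hwne0
      rw [div_neg, neg_mul, h4, add_neg_cancel]
    have hsub : (univ.filter (fun p : Fin n × Fin m => z' p.1 p.2 ≠ 0)) ⊆ S.erase p₀ := by
      intro p hp
      rw [mem_filter] at hp
      rw [mem_erase]
      constructor
      · intro hpe
        subst hpe
        exact hp.2 hp₀zero
      · by_contra h
        have h1 := hwS p (by simpa [hS] using h)
        have h2 : z p.1 p.2 = 0 := by
          by_contra h3
          exact h (by simp [hS, h3])
        apply hp.2
        simp only [hz', h1, h2, mul_zero, add_zero]
    have hcard : N z' < N z := by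
      have hp₀S : p₀ ∈ S := hmemS p₀ hp₀mem
      calc N z' ≤ (S.erase p₀).card := Finset.card_le_card hsub
        _ < S.card := Finset.card_erase_lt_of_mem hp₀S
        _ = N z := rfl
    have := hmin z' ⟨⟨hz'nn, hz'col⟩, hz'cons⟩
    omega
  -- from the support bound, bound the number of sharings
  have hfilter_eq : ∀ o : Fin m,
      (univ.filter (fun i : Fin n => 0 < z i o)) =
      (univ.filter (fun i : Fin n => z i o ≠ 0)) := by
    intro o
    refine Finset.filter_congr (fun i _ => ?_)
    constructor
    · intro h; exact ne_of_gt h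
    · intro h; exact lt_of_le_of_ne (hznn i o) (Ne.symm h)
  have hcsum : ∑ o : Fin m, (univ.filter (fun i : Fin n => z i o ≠ 0)).card = S.card := by
    rw [hS]
    rw [Finset.card_filter]
    rw [Fintype.sum_prod_type]
    rw [Finset.sum_comm]
    refine Finset.sum_congr rfl (fun o _ => ?_)
    rw [Finset.card_filter]
  have hc1 : ∀ o : Fin m, 1 ≤ (univ.filter (fun i : Fin n => z i o ≠ 0)).card := by
    intro o
    rw [Nat.one_le_iff_ne_zero, ← Nat.pos_iff_ne_zero, Finset.card_pos]
    by_contra h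
    rw [Finset.not_nonempty_iff_eq_empty, Finset.filter_eq_empty_iff] at h
    have : ∑ i, z i o = 0 := by
      refine Finset.sum_eq_zero (fun i _ => ?_)
      have := h (mem_univ i)
      simpa using this
    rw [hzcol o] at this
    exact one_ne_zero this
  have hsh : sharings z + m = S.card := by
    rw [sharings, ← hcsum]
    have : ∀ o : Fin m, (univ.filter (fun i : Fin n => 0 < z i o)).card - 1 + 1
        = (univ.filter (fun i : Fin n => z i o ≠ 0)).card := by
      intro o
      rw [hfilter_eq o]
      exact Nat.sub_add_cancel (hc1 o)
    calc (∑ o : Fin m, ((univ.filter (fun i : Fin n => 0 < z i o)).card - 1)) + m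
        = ∑ o : Fin m, (((univ.filter (fun i : Fin n => 0 < z i o)).card - 1) + 1) := by
          rw [Finset.sum_add_distrib]; simp
      _ = ∑ o : Fin m, (univ.filter (fun i : Fin n => z i o ≠ 0)).card :=
          Finset.sum_congr rfl (fun o _ => this o)
  omega
end

section
/- There exists an instance with n agents and n(n−1) pure goods in which every consensus allocation shares all n(n−1) goods; hence the worst-case bound of n(n−1) sharings for consensus allocations is tight. Specifically: each good is 'big' for exactly one agent who values it at n − 0.5, and each agent values each of his (n−1)² 'small' goods at 0.5/(n−1); then each agent's total value is n(n−1), each bundle in a consensus allocation must be worth n−1 to every agent, and since each big good's value (n−0.5) exceeds n−1, no good can be fully allocated to any single agent. -/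
open Finset

/-- Tightness instance: with n(n-1) goods, each being "big" (worth n-0.5) for exactly one
agent and "small" (worth 0.5/(n-1)) for the others, every consensus allocation shares
all goods. -/
theorem stmt18 {n : ℕ} (hn : 2 ≤ n) (owner : Fin (n * (n - 1)) → Fin n)
    (howner : ∀ i : Fin n,
      (Finset.univ.filter (fun o => owner o = i)).card = n - 1)
    (v : Fin n → Fin (n * (n - 1)) → ℝ)
    (hv : ∀ i o, v i o = if owner o = i then (n : ℝ) - 0.5 else 0.5 / ((n : ℝ) - 1))
    (z : Fin n → Fin (n * (n - 1)) → ℝ)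
    (hz : IsAllocation z) (hcons : IsConsensus v z) :
    ∀ o i, z i o ≠ 1 := by
  intro o₀ i₀ h1
  obtain ⟨k, rfl⟩ : ∃ k, n = k + 2 := ⟨n - 2, by omega⟩
  set a := owner o₀ with ha
  have hzpos := hz.1
  have hcard2 : (Finset.univ.filter (fun o => ¬ owner o = a)).card = (k+1)*(k+1) := by
    have h := Finset.card_filter_add_card_filter_not
      (s := (Finset.univ : Finset (Fin ((k+2) * (k+2-1))))) (p := fun o => owner o = a)
    rw [howner a, Finset.card_univ, Fintype.card_fin] at h
    have he : (k+2)*(k+2-1) = (k+1)*(k+1) + (k+1) := by show (k+2)*(k+1) = _ ; ring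
    omega
  have hVa : (∑ o, v a o) = ((k:ℝ)+2) * ((k:ℝ)+1) := by
    rw [← Finset.sum_filter_add_sum_filter_not Finset.univ (fun o => owner o = a)]
    have h1' : ∑ o ∈ Finset.univ.filter (fun o => owner o = a), v a o
        = ((k:ℝ)+1) * (((k:ℝ)+2) - 0.5) := by
      rw [Finset.sum_congr rfl (fun o ho => by
        rw [hv, if_pos (Finset.mem_filter.mp ho).2]), Finset.sum_const, howner a]
      show ((k+2-1) : ℕ) • _ = _
      push_cast
      ring
    have h2' : ∑ o ∈ Finset.univ.filter (fun o => ¬ owner o = a), v a o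
        = ((k:ℝ)+1) * ((k:ℝ)+1) * (0.5/((k:ℝ)+1)) := by
      rw [Finset.sum_congr rfl (fun o ho => by
        rw [hv, if_neg (Finset.mem_filter.mp ho).2]), Finset.sum_const, hcard2]
      push_cast
      ring
    rw [h1', h2']
    have hk : ((k:ℝ)+1) ≠ 0 := by positivity
    field_simp
    ring
  have hge : ((k:ℝ)+2) - 0.5 ≤ ∑ o, v a o * z i₀ o := by
    have hterm : v a o₀ * z i₀ o₀ = ((k:ℝ)+2) - 0.5 := by
      rw [hv, if_pos rfl, h1]
      push_cast
      ring
    refine le_trans (le_of_eq hterm.symm)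
      (Finset.single_le_sum (f := fun o => v a o * z i₀ o) ?_ (Finset.mem_univ o₀))
    intro o _
    have hvpos : 0 ≤ v a o := by
      rw [hv]
      split
      · push_cast; linarith
      · rw [show (((k+2:ℕ)):ℝ) - 1 = (k:ℝ)+1 by push_cast; ring]
        positivity
    exact mul_nonneg hvpos (hzpos i₀ o)
  have hc := hcons a i₀
  rw [hVa] at hc
  rw [hc] at hge
  have hk2 : ((k:ℝ)+2) ≠ 0 := by positivity
  rw [show (((k+2:ℕ)):ℝ) = ((k:ℝ)+2) by push_cast; ring] at hge
  rw [mul_comm, mul_div_assoc, div_self hk2, mul_one] at hge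
  linarith
end

section
/- Let a_1,...,a_{2p} be distinct positive integers with sum 2S and let 0 < b < 1/(4p). Define two agents' valuations over 2p goods by v_A(o) = a_o and v_B(o) = a_o + b. Then a partition (X_A, X_B) of the goods is a consensus allocation (u_A(X_A) = u_A(X_B) and u_B(X_A) = u_B(X_B)) if and only if Σ_{o∈X_A} a_o = Σ_{o∈X_B} a_o = S and |X_A| = |X_B| = p. -/
open Finset

/-- With distinct positive integers a_o and Bob's values a_o + b for small b > 0,
a partition is a consensus allocation iff both parts have Alice-sum S and cardinality p. -/
theorem stmt19 {p : ℕ} (hp : 0 < p) (a : Fin (2 * p) → ℤ) (S : ℤ) (b : ℝ)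
    (ha_pos : ∀ o, 0 < a o) (ha_inj : Function.Injective a)
    (hsum : ∑ o, a o = 2 * S)
    (hb0 : 0 < b) (hb1 : b < 1 / (4 * p)) :
    ∀ X : Finset (Fin (2 * p)),
      ((∑ o ∈ X, (a o : ℝ)) = ∑ o ∈ Xᶜ, (a o : ℝ) ∧
        (∑ o ∈ X, ((a o : ℝ) + b)) = ∑ o ∈ Xᶜ, ((a o : ℝ) + b)) ↔
      ((∑ o ∈ X, a o) = S ∧ (∑ o ∈ Xᶜ, a o) = S ∧ X.card = p ∧ Xᶜ.card = p) := by
  intro X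
  have hsplit : (∑ o ∈ X, a o) + (∑ o ∈ Xᶜ, a o) = 2 * S := by
    rw [Finset.sum_add_sum_compl]; exact hsum
  have hcard : X.card + Xᶜ.card = 2 * p := by
    rw [Finset.card_add_card_compl, Fintype.card_fin]
  constructor
  · rintro ⟨h1, h2⟩
    have hZ : (∑ o ∈ X, a o) = ∑ o ∈ Xᶜ, a o := by
      exact_mod_cast (by push_cast at h1 ⊢; exact h1 : ((∑ o ∈ X, a o : ℤ) : ℝ) = ((∑ o ∈ Xᶜ, a o : ℤ) : ℝ))
    have hS1 : (∑ o ∈ X, a o) = S := by linarith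
    have hS2 : (∑ o ∈ Xᶜ, a o) = S := by linarith
    have h2' : (X.card : ℝ) * b = (Xᶜ.card : ℝ) * b := by
      simp only [Finset.sum_add_distrib, Finset.sum_const, nsmul_eq_mul] at h2
      linarith
    have hc : (X.card : ℝ) = Xᶜ.card := mul_right_cancel₀ (ne_of_gt hb0) h2'
    have hc' : X.card = Xᶜ.card := by exact_mod_cast hc
    have : X.card = p := by omega
    exact ⟨hS1, hS2, this, by omega⟩
  · rintro ⟨h1, h2, h3, h4⟩
    constructor
    · push_cast [← h1, ← h2]
      exact_mod_cast congrArg (fun z : ℤ => (z : ℝ)) (h1.trans h2.symm)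
    · simp only [Finset.sum_add_distrib, Finset.sum_const, nsmul_eq_mul, h3, h4]
      have : ((∑ o ∈ X, a o : ℤ) : ℝ) = ((∑ o ∈ Xᶜ, a o : ℤ) : ℝ) := by
        exact_mod_cast congrArg (fun z : ℤ => (z : ℝ)) (h1.trans h2.symm)
      push_cast at this ⊢
      linarith
end
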